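/- arXiv:1001.1186 — 8 statements merged into one kernel-verified Lean document; each statement's English description precedes it below -/
import Mathlib

section
/- A finite set of distinct points Ξ in F² is cartesian if and only if S_x(Ξ) = S_y(Ξ), where S_x(Ξ) and S_y(Ξ) are the lower sets obtained by covering Ξ with horizontal (resp. vertical) lines ordered by decreasing numbers of points. -/
open MvPolynomial Finset

/-- A finite subset of ℕ² closed under componentwise decrease. -/
def IsLowerSet2 (A : Finset (ℕ × ℕ)) : Prop :=
  ∀ a ∈ A, ∀ b : ℕ × ℕ, b.1 ≤ a.1 → b.2 ≤ a.2 → b ∈ A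

/-- `Ξ` is `A`-cartesian: `Ξ = {(x i, y j) : (i,j) ∈ A}` for a lower set `A`,
with distinct `x i`'s and distinct `y j`'s (on the relevant indices). -/
def IsCartesianWith {F : Type*} [Field F] [DecidableEq F] (A : Finset (ℕ × ℕ)) (Ξ : Finset (F × F)) : Prop :=
  IsLowerSet2 A ∧ ∃ x y : ℕ → F,
    Set.InjOn x {i | ∃ j, (i, j) ∈ A} ∧ Set.InjOn y {j | ∃ i, (i, j) ∈ A} ∧
    Ξ = A.image fun ij => (x ij.1, y ij.2)

/-- `Ξ` is cartesian. -/
def IsCartesian {F : Type*} [Field F] [DecidableEq F] (Ξ : Finset (F × F)) : Prop :=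
  ∃ A, IsCartesianWith A Ξ

/-- Multiset of numbers of points of `Ξ` on the horizontal lines meeting `Ξ`. -/
def rowCounts {F : Type*} [Field F] [DecidableEq F] (Ξ : Finset (F × F)) : Multiset ℕ :=
  (Ξ.image Prod.snd).val.map fun b => (Ξ.filter fun p => p.2 = b).card

/-- Multiset of numbers of points of `Ξ` on the vertical lines meeting `Ξ`. -/
def colCounts {F : Type*} [Field F] [DecidableEq F] (Ξ : Finset (F × F)) : Multiset ℕ :=
  (Ξ.image Prod.fst).val.map fun a => (Ξ.filter fun p => p.1 = a).card

/-- Multiset of row lengths of a finite subset of ℕ². -/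
def rowCountsA (A : Finset (ℕ × ℕ)) : Multiset ℕ :=
  (A.image Prod.snd).val.map fun j => (A.filter fun p => p.2 = j).card

/-- Multiset of column heights of a finite subset of ℕ². -/
def colCountsA (A : Finset (ℕ × ℕ)) : Multiset ℕ :=
  (A.image Prod.fst).val.map fun i => (A.filter fun p => p.1 = i).card

/-- `A` is the lower set `S_x(Ξ)` obtained by covering `Ξ` by horizontal lines
ordered by (nonincreasing) numbers of points: a lower set whose rows have
exactly the same lengths as the horizontal sections of `Ξ`. -/
def IsSx {F : Type*} [Field F] [DecidableEq F] (Ξ : Finset (F × F)) (A : Finset (ℕ × ℕ)) : Prop :=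
  IsLowerSet2 A ∧ rowCountsA A = rowCounts Ξ

/-- `A` is the lower set `S_y(Ξ)` obtained by covering `Ξ` by vertical lines. -/
def IsSy {F : Type*} [Field F] [DecidableEq F] (Ξ : Finset (F × F)) (A : Finset (ℕ × ℕ)) : Prop :=
  IsLowerSet2 A ∧ colCountsA A = colCounts Ξ

/-- Evaluation of a bivariate polynomial at a point of `F²`. -/
noncomputable def evalAt {F : Type*} [Field F] (ξ : F × F) (p : MvPolynomial (Fin 2) F) : F :=
  MvPolynomial.eval ![ξ.1, ξ.2] p

/-- The span of the monomials `x^i y^j`, `(i,j) ∈ A`. -/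
noncomputable def monSpan (F : Type*) [Field F] (A : Finset (ℕ × ℕ)) :
    Submodule F (MvPolynomial (Fin 2) F) :=
  Submodule.span F ((fun ij : ℕ × ℕ => (X 0 : MvPolynomial (Fin 2) F) ^ ij.1 * X 1 ^ ij.2) '' A)

/-- The interpolation scheme `(Ξ, A)` is regular: every data on `Ξ` is matched by a
unique element of the span of the monomials indexed by `A`. -/
def IsRegularScheme {F : Type*} [Field F] (Ξ : Finset (F × F)) (A : Finset (ℕ × ℕ)) : Prop :=
  ∀ f : F × F → F, ∃! p : MvPolynomial (Fin 2) F,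
    p ∈ monSpan F A ∧ ∀ ξ ∈ Ξ, evalAt ξ p = f ξ

/-- The ideal of polynomials vanishing on `Ξ`. -/
noncomputable def vanishingIdeal (F : Type*) [Field F] (Ξ : Finset (F × F)) :
    Ideal (MvPolynomial (Fin 2) F) :=
  ⨅ ξ ∈ Ξ, RingHom.ker (MvPolynomial.eval ![(ξ : F × F).1, ξ.2])

/-- The `≺_lex`-leading exponent (x-exponent compared first), `⊥` for the zero polynomial. -/
noncomputable def lexDeg {F : Type*} [Field F] (p : MvPolynomial (Fin 2) F) :
    WithBot (ℕ ×ₗ ℕ) :=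
  (p.support.image fun d => toLex (d 0, d 1)).max


/-!
Write `r_b` and `c_a` for the numbers of points of `Ξ` on the horizontal line `b` and the vertical
line `a`. A lower set is determined by its multiset of row lengths (its column heights count the
rows that are long enough), and likewise by its column lengths; injective relabellings of the two
coordinates preserve both multisets. This gives the forward direction.

Conversely, counting pairs of points on a common horizontal line gives
`∑_b r_b ^ 2 = ∑_{a,a'} #(col a ∩ col a') ≤ ∑_{a,a'} min c_a c_a'`,
with equality iff the columns of `Ξ` are nested, i.e. iff `Ξ` contains no `(a, b), (a', b')` with
`(a, b'), (a', b) ∉ Ξ`. Both sides only depend on the row and column length multisets, and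
equality holds for the lower set `S_x(Ξ) = S_y(Ξ)`. Once rows and columns are nested, listing them
by decreasing length exhibits `Ξ` as the image of a lower set.
-/

def Multiset.sumMinPairs (m : Multiset ℕ) : ℕ := (m.map fun c => (m.map (min c)).sum).sum

namespace Finset

variable {α β γ δ : Type*} [DecidableEq α] [DecidableEq β]

def row (S : Finset (α × β)) (b : β) : Finset α := {a ∈ S.image Prod.fst | (a, b) ∈ S}

def col (S : Finset (α × β)) (a : α) : Finset β := {b ∈ S.image Prod.snd | (a, b) ∈ S}

def rowLengths (S : Finset (α × β)) : Multiset ℕ :=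
  (S.image Prod.snd).val.map fun b => #(S.row b)

def colLengths (S : Finset (α × β)) : Multiset ℕ :=
  (S.image Prod.fst).val.map fun a => #(S.col a)

def IsFerrers (S : Finset (α × β)) : Prop :=
  ∀ p ∈ S, ∀ q ∈ S, (p.1, q.2) ∈ S ∨ (q.1, p.2) ∈ S

variable {S : Finset (α × β)} {a a' : α} {b b' : β}

@[simp]
lemma mem_row : a ∈ S.row b ↔ (a, b) ∈ S := by
  simpa [row] using fun h => ⟨b, h⟩

@[simp]
lemma mem_col : b ∈ S.col a ↔ (a, b) ∈ S := by
  simpa [col] using fun h => ⟨a, h⟩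

lemma card_filter_snd_eq_card_row (S : Finset (α × β)) (b : β) :
    #{p ∈ S | p.2 = b} = #(S.row b) :=
  card_bij' (fun p _ => p.1) (fun a _ => (a, b)) (by rintro ⟨a, _⟩ h; aesop)
    (by simp +contextual) (by simp +contextual) (by simp)

lemma card_filter_fst_eq_card_col (S : Finset (α × β)) (a : α) :
    #{p ∈ S | p.1 = a} = #(S.col a) :=
  card_bij' (fun p _ => p.2) (fun b _ => (a, b)) (by rintro ⟨_, b⟩ h; aesop)
    (by simp +contextual) (by simp +contextual) (by simp)

lemma mem_image_swap {p : β × α} : p ∈ S.image Prod.swap ↔ p.swap ∈ S := by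
  simpa using Prod.swap_injective.mem_finset_image (s := S) (a := p.swap)

@[simp]
lemma row_image_swap (S : Finset (α × β)) (a : α) : (S.image Prod.swap).row a = S.col a := by
  ext; simp

@[simp]
lemma col_image_swap (S : Finset (α × β)) (b : β) : (S.image Prod.swap).col b = S.row b := by
  ext; simp

lemma rowLengths_image_swap (S : Finset (α × β)) :
    (S.image Prod.swap).rowLengths = S.colLengths := by
  simp only [rowLengths, colLengths, row_image_swap, image_image]
  rfl

lemma IsFerrers.image_swap (h : S.IsFerrers) : (S.image Prod.swap).IsFerrers := by
  intro p hp q hq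
  simp only [mem_image_swap] at hp hq ⊢
  exact (h _ hp _ hq).symm

lemma IsFerrers.row_subset_or (h : S.IsFerrers) (b b' : β) :
    S.row b ⊆ S.row b' ∨ S.row b' ⊆ S.row b := by
  by_contra! hne
  obtain ⟨a, hab, hab'⟩ := not_subset.mp hne.1
  obtain ⟨a', ha'b', ha'b⟩ := not_subset.mp hne.2
  rw [mem_row] at hab hab' ha'b' ha'b
  exact (h _ hab _ ha'b').elim hab' ha'b

lemma IsFerrers.col_subset_or (h : S.IsFerrers) (a a' : α) :
    S.col a ⊆ S.col a' ∨ S.col a' ⊆ S.col a := by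
  simpa using h.image_swap.row_subset_or a a'

lemma IsFerrers.mem_of_card_row_le (h : S.IsFerrers) (hab : (a, b) ∈ S)
    (hle : #(S.row b) ≤ #(S.row b')) : (a, b') ∈ S := by
  rw [← mem_row]
  rcases h.row_subset_or b b' with hsub | hsub
  · exact hsub (mem_row.mpr hab)
  · exact eq_of_subset_of_card_le hsub hle ▸ mem_row.mpr hab

lemma IsFerrers.mem_of_card_col_le (h : S.IsFerrers) (hab : (a, b) ∈ S)
    (hle : #(S.col a) ≤ #(S.col a')) : (a', b) ∈ S := by
  rw [← mem_col]
  rcases h.col_subset_or a a' with hsub | hsub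
  · exact hsub (mem_col.mpr hab)
  · exact eq_of_subset_of_card_le hsub hle ▸ mem_col.mpr hab

lemma rowLengths_image_prodMap [DecidableEq γ] [DecidableEq δ] {x : α → γ} {y : β → δ}
    (hx : Set.InjOn x {a | ∃ b, (a, b) ∈ S}) (hy : Set.InjOn y {b | ∃ a, (a, b) ∈ S}) :
    (S.image (Prod.map x y)).rowLengths = S.rowLengths := by
  have hy' : Set.InjOn y (S.image Prod.snd) :=
    hy.mono fun b hb => by simpa using mem_image.mp (mem_coe.mp hb)
  have hrow : ∀ b ∈ S.image Prod.snd,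
      (S.image (Prod.map x y)).row (y b) = (S.row b).image x := by
    intro b hb
    ext c
    simp only [mem_row, mem_image, Prod.exists, Prod.map, Prod.mk.injEq]
    constructor
    · rintro ⟨a, b', hab', rfl, hb'⟩
      exact ⟨a, hy ⟨a, hab'⟩ (by simpa using hb) hb' ▸ hab', rfl⟩
    · rintro ⟨a, hab, rfl⟩
      exact ⟨a, b, hab, rfl, rfl⟩
  rw [rowLengths, image_image, show Prod.snd ∘ Prod.map x y = y ∘ Prod.snd from rfl,
    ← image_image, image_val_of_injOn hy', Multiset.map_map, rowLengths]
  refine Multiset.map_congr rfl fun b hb => ?_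
  rw [Function.comp_apply, hrow b hb, card_image_of_injOn
    (hx.mono fun a ha => show ∃ b, (a, b) ∈ S from ⟨b, mem_row.mp ha⟩)]

lemma colLengths_image_prodMap [DecidableEq γ] [DecidableEq δ] {x : α → γ} {y : β → δ}
    (hx : Set.InjOn x {a | ∃ b, (a, b) ∈ S}) (hy : Set.InjOn y {b | ∃ a, (a, b) ∈ S}) :
    (S.image (Prod.map x y)).colLengths = S.colLengths := by
  rw [← rowLengths_image_swap, ← rowLengths_image_swap, image_image, ← Prod.map_comp_swap,
    ← image_image]
  exact rowLengths_image_prodMap (by simpa [mem_image_swap] using hy)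
    (by simpa [mem_image_swap] using hx)

lemma sum_sq_rowLengths (S : Finset (α × β)) :
    (S.rowLengths.map (· ^ 2)).sum =
      ∑ a ∈ S.image Prod.fst, ∑ a' ∈ S.image Prod.fst, #(S.col a ∩ S.col a') := by
  have hrow (b : β) : #(S.row b) = ∑ a ∈ S.image Prod.fst, if (a, b) ∈ S then 1 else 0 :=
    card_filter _ _
  have hcol (a a' : α) : #(S.col a ∩ S.col a') =
      ∑ b ∈ S.image Prod.snd, if (a, b) ∈ S ∧ (a', b) ∈ S then 1 else 0 := by
    rw [col, col, ← filter_and, card_filter]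
  simp only [rowLengths, Multiset.map_map, Function.comp_def, ← sum_eq_multiset_sum, hrow, hcol,
    sq, sum_mul_sum, ite_zero_mul_ite_zero, mul_one]
  rw [sum_comm]
  exact sum_congr rfl fun _ _ => sum_comm

lemma sumMinPairs_colLengths (S : Finset (α × β)) :
    S.colLengths.sumMinPairs =
      ∑ a ∈ S.image Prod.fst, ∑ a' ∈ S.image Prod.fst, min #(S.col a) #(S.col a') := by
  simp only [Multiset.sumMinPairs, colLengths, Multiset.map_map, Function.comp_def,
    ← sum_eq_multiset_sum]

lemma card_col_inter_col_le (S : Finset (α × β)) (a a' : α) :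
    #(S.col a ∩ S.col a') ≤ min #(S.col a) #(S.col a') :=
  le_min (card_le_card inter_subset_left) (card_le_card inter_subset_right)

lemma IsFerrers.card_col_inter_col (h : S.IsFerrers) (a a' : α) :
    #(S.col a ∩ S.col a') = min #(S.col a) #(S.col a') := by
  rcases h.col_subset_or a a' with hsub | hsub
  · rw [inter_eq_left.mpr hsub, min_eq_left (card_le_card hsub)]
  · rw [inter_eq_right.mpr hsub, min_eq_right (card_le_card hsub)]

lemma isFerrers_iff_sum_sq_rowLengths_eq :
    S.IsFerrers ↔ (S.rowLengths.map (· ^ 2)).sum = S.colLengths.sumMinPairs := by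
  rw [sum_sq_rowLengths, sumMinPairs_colLengths]
  refine ⟨fun h => sum_congr rfl fun a _ => sum_congr rfl fun a' _ => h.card_col_inter_col a a',
    fun heq => ?_⟩
  by_contra hF
  simp only [IsFerrers, not_forall, not_or] at hF
  obtain ⟨⟨a, b⟩, hab, ⟨a', b'⟩, ha'b', hab', ha'b⟩ := hF
  have hlt : #(S.col a ∩ S.col a') < min #(S.col a) #(S.col a') := by
    refine lt_min (card_lt_card ⟨inter_subset_left, fun hsub => ha'b ?_⟩)
      (card_lt_card ⟨inter_subset_right, fun hsub => hab' ?_⟩)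
    · exact mem_col.mp (mem_inter.mp (hsub (mem_col.mpr hab))).2
    · exact mem_col.mp (mem_inter.mp (hsub (mem_col.mpr ha'b'))).1
  refine heq.not_lt (sum_lt_sum (fun a _ => sum_le_sum fun a' _ => card_col_inter_col_le S a a')
    ⟨a, mem_image_of_mem _ hab, sum_lt_sum (fun a' _ => card_col_inter_col_le S a a')
      ⟨a', mem_image_of_mem _ ha'b', hlt⟩⟩)

lemma exists_bijOn_antitoneOn [Inhabited γ] (s : Finset γ) (f : γ → ℕ) :
    ∃ e : ℕ → γ, Set.BijOn e (Set.Iio #s) s ∧ AntitoneOn (f ∘ e) (Set.Iio #s) := by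
  set l := s.toList.mergeSort fun a b => f b ≤ f a
  have hperm : l.Perm s.toList := List.mergeSort_perm _ _
  have hsorted : l.Pairwise fun a b => f b ≤ f a := by
    simpa using List.pairwise_mergeSort (le := fun a b => decide (f b ≤ f a))
      (fun _ _ _ => by simp only [decide_eq_true_eq]; omega) (fun _ _ => by simp; omega) s.toList
  have hlen : l.length = #s := hperm.length_eq.trans (length_toList s)
  have hget {i : ℕ} (hi : i ∈ Set.Iio #s) : l.getD i default = l[i]'(hlen ▸ hi) :=
    List.getD_eq_getElem _ _ _
  refine ⟨fun i => l.getD i default,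
    ⟨fun i hi => ?_, fun i hi j hj hij => ?_, fun c hc => ?_⟩, ?_⟩
  · show l.getD i default ∈ (s : Set γ)
    rw [hget hi, mem_coe]
    exact mem_toList.mp (hperm.mem_iff.mp (List.getElem_mem _))
  · dsimp only at hij
    rw [hget hi, hget hj] at hij
    exact ((hperm.nodup_iff.mpr (nodup_toList s)).getElem_inj_iff).mp hij
  · obtain ⟨i, hi, rfl⟩ := List.mem_iff_getElem.mp (hperm.mem_iff.mpr (mem_toList.mpr hc))
    exact ⟨i, hlen ▸ hi, hget (hlen ▸ hi)⟩
  · intro i hi j hj hij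
    rcases hij.lt_or_eq with hij | rfl
    · dsimp only [Function.comp_apply]
      rw [hget hi, hget hj]
      exact List.pairwise_iff_getElem.mp hsorted i j _ _ hij
    · rfl

lemma IsFerrers.isCartesian {F : Type*} [Field F] [DecidableEq F] {Ξ : Finset (F × F)}
    (h : Ξ.IsFerrers) : IsCartesian Ξ := by
  let _ : Inhabited F := ⟨0⟩
  obtain ⟨x, hx, hx_anti⟩ := (Ξ.image Prod.fst).exists_bijOn_antitoneOn fun a => #(Ξ.col a)
  obtain ⟨y, hy, hy_anti⟩ := (Ξ.image Prod.snd).exists_bijOn_antitoneOn fun b => #(Ξ.row b)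
  set M := #(Ξ.image Prod.fst)
  set N := #(Ξ.image Prod.snd)
  have hC {i j : ℕ} : (i, j) ∈ {ij ∈ range M ×ˢ range N | (x ij.1, y ij.2) ∈ Ξ} ↔
      i < M ∧ j < N ∧ (x i, y j) ∈ Ξ := by
    simp [and_assoc]
  refine ⟨{ij ∈ range M ×ˢ range N | (x ij.1, y ij.2) ∈ Ξ}, ?_, x, y, ?_, ?_, ?_⟩
  · rintro ⟨i, j⟩ hij ⟨i', j'⟩ (hi : i' ≤ i) (hj : j' ≤ j)
    obtain ⟨hiM, hjN, hxy⟩ := hC.mp hij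
    have hi'M : i' < M := hi.trans_lt hiM
    have hj'N : j' < N := hj.trans_lt hjN
    have hxy' : (x i, y j') ∈ Ξ := h.mem_of_card_row_le hxy (hy_anti hj'N hjN hj)
    exact hC.mpr ⟨hi'M, hj'N, h.mem_of_card_col_le hxy' (hx_anti hi'M hiM hi)⟩
  · exact hx.injOn.mono fun i ⟨j, hij⟩ => (hC.mp hij).1
  · exact hy.injOn.mono fun j ⟨i, hij⟩ => (hC.mp hij).2.1
  · ext p
    refine ⟨fun hp => ?_, fun hp => ?_⟩
    · obtain ⟨a, b⟩ := p
      obtain ⟨i, hi, rfl⟩ := hx.surjOn (mem_image_of_mem Prod.fst hp)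
      obtain ⟨j, hj, rfl⟩ := hy.surjOn (mem_image_of_mem Prod.snd hp)
      exact mem_image.mpr ⟨(i, j), hC.mpr ⟨hi, hj, hp⟩, rfl⟩
    · obtain ⟨⟨i, j⟩, hij, rfl⟩ := mem_image.mp hp
      exact (hC.mp hij).2.2

end Finset

namespace IsLowerSet2

variable {L L' : Finset (ℕ × ℕ)} {i j : ℕ}

lemma image_swap (hL : IsLowerSet2 L) : IsLowerSet2 (L.image Prod.swap) := by
  intro p hp q h1 h2
  rw [mem_image_swap] at hp ⊢
  exact hL _ hp _ h2 h1

lemma isFerrers (hL : IsLowerSet2 L) : L.IsFerrers := by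
  intro p hp q hq
  rcases le_total p.1 q.1 with h | h
  · exact Or.inl (hL q hq _ h le_rfl)
  · exact Or.inr (hL p hp _ h le_rfl)

lemma mem_iff_lt_card_row (hL : IsLowerSet2 L) : (i, j) ∈ L ↔ i < #(L.row j) := by
  constructor
  · intro h
    calc i < #(range (i + 1)) := by simp
      _ ≤ #(L.row j) := card_le_card fun i' hi' =>
        mem_row.mpr (hL _ h (i', j) (Nat.lt_succ_iff.mp (mem_range.mp hi')) le_rfl)
  · intro h
    by_contra h'
    have hsub : L.row j ⊆ range i := fun i' hi' =>
      mem_range.mpr (lt_of_not_ge fun hle => h' (hL _ (mem_row.mp hi') _ hle le_rfl))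
    simpa using h.trans_le (card_le_card hsub)

lemma mem_iff_lt_card_col (hL : IsLowerSet2 L) : (i, j) ∈ L ↔ j < #(L.col i) := by
  simpa [mem_image_swap] using hL.image_swap.mem_iff_lt_card_row (i := j) (j := i)

lemma card_col_eq_countP (hL : IsLowerSet2 L) (i : ℕ) :
    #(L.col i) = L.rowLengths.countP (i < ·) := by
  rw [rowLengths, Multiset.countP_map, col, card_def, filter_val]
  congr 2
  exact funext fun j => propext hL.mem_iff_lt_card_row

lemma eq_of_rowLengths_eq (hL : IsLowerSet2 L) (hL' : IsLowerSet2 L')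
    (h : L.rowLengths = L'.rowLengths) : L = L' := by
  ext ⟨i, j⟩
  rw [hL.mem_iff_lt_card_col, hL'.mem_iff_lt_card_col, hL.card_col_eq_countP,
    hL'.card_col_eq_countP, h]

lemma eq_of_colLengths_eq (hL : IsLowerSet2 L) (hL' : IsLowerSet2 L')
    (h : L.colLengths = L'.colLengths) : L = L' :=
  image_injective Prod.swap_injective <|
    hL.image_swap.eq_of_rowLengths_eq hL'.image_swap (by simpa [rowLengths_image_swap])

end IsLowerSet2

lemma isSx_iff {F : Type*} [Field F] [DecidableEq F] {Ξ : Finset (F × F)}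
    {A : Finset (ℕ × ℕ)} :
    IsSx Ξ A ↔ IsLowerSet2 A ∧ A.rowLengths = Ξ.rowLengths := by
  simp only [IsSx, rowCountsA, rowCounts, card_filter_snd_eq_card_row, rowLengths]

lemma isSy_iff {F : Type*} [Field F] [DecidableEq F] {Ξ : Finset (F × F)}
    {B : Finset (ℕ × ℕ)} :
    IsSy Ξ B ↔ IsLowerSet2 B ∧ B.colLengths = Ξ.colLengths := by
  simp only [IsSy, colCountsA, colCounts, card_filter_fst_eq_card_col, colLengths]

/-- A finite set of distinct points `Ξ ⊆ F²` is cartesian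
if and only if `S_x(Ξ) = S_y(Ξ)`. -/
theorem cartesian_iff_Sx_eq_Sy {F : Type*} [Field F] [DecidableEq F]
    (Ξ : Finset (F × F)) (A B : Finset (ℕ × ℕ))
    (hA : IsSx Ξ A) (hB : IsSy Ξ B) :
    IsCartesian Ξ ↔ A = B := by
  obtain ⟨hA_low, hA_rows⟩ := isSx_iff.mp hA
  obtain ⟨hB_low, hB_cols⟩ := isSy_iff.mp hB
  constructor
  · rintro ⟨C, hC, x, y, hx, hy, rfl⟩
    rw [hA_low.eq_of_rowLengths_eq hC (hA_rows.trans (rowLengths_image_prodMap hx hy)),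
      hB_low.eq_of_colLengths_eq hC (hB_cols.trans (colLengths_image_prodMap hx hy))]
  · rintro rfl
    refine IsFerrers.isCartesian (isFerrers_iff_sum_sq_rowLengths_eq.mpr ?_)
    rw [← hA_rows, ← hB_cols]
    exact isFerrers_iff_sum_sq_rowLengths_eq.mp hA_low.isFerrers
end

section
/- A finite set of distinct points Ξ ⊂ F² is cartesian if and only if the horizontal sections are nested, H_0(Ξ) ⊇ H_1(Ξ) ⊇ ⋯ ⊇ H_ν(Ξ), and the vertical sections are nested, V_0(Ξ) ⊇ V_1(Ξ) ⊇ ⋯ ⊇ V_λ(Ξ), for suitable orderings of the lines by decreasing number of points. -/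
open MvPolynomial Finset

/-- Abscissae of the points of `Ξ` on the horizontal line `y = b`. -/
def Hsec {F : Type*} [Field F] [DecidableEq F] (Ξ : Finset (F × F)) (b : F) : Finset F :=
  (Ξ.filter fun p => p.2 = b).image Prod.fst

/-- Ordinates of the points of `Ξ` on the vertical line `x = a`. -/
def Vsec {F : Type*} [Field F] [DecidableEq F] (Ξ : Finset (F × F)) (a : F) : Finset F :=
  (Ξ.filter fun p => p.1 = a).image Prod.snd

/-!
If `Ξ = {(x i, y j) : (i, j) ∈ A}` with `A` a lower set, listing the rows by increasing `j`
nests the horizontal sections, because `(i, j) ∈ A` forces `(i, j') ∈ A` for `j' ≤ j`; swapping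
the coordinates gives the vertical case. Conversely, if the rows `b₀, b₁, …` and the columns
`a₀, a₁, …` are listed with nested sections, then `Ξ` is the image of
`A = {(i, j) : (a i, b j) ∈ Ξ}`, and `A` is a lower set: from `(a i, b j) ∈ Ξ` the nesting of rows
gives `(a i, b j') ∈ Ξ` and then the nesting of columns gives `(a i', b j') ∈ Ξ`.
-/

theorem Finset.exists_nodup_pairwise_image {α β : Type*} [LinearOrder α] [DecidableEq β]
    (s : Finset α) {g : α → β} (hg : Set.InjOn g s) {R : β → β → Prop}
    (hR : ∀ i ∈ s, ∀ j ∈ s, i ≤ j → R (g i) (g j)) :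
    ∃ L : List β, L.Nodup ∧ L.toFinset = s.image g ∧ L.Pairwise R := by
  refine ⟨s.sort.map g, (s.sort_nodup _).map_on ?_, ?_, ?_⟩
  · exact fun i hi j hj => hg (s.mem_sort _ |>.1 hi) (s.mem_sort _ |>.1 hj)
  · ext b
    simp
  · exact List.pairwise_map.2 <| (s.pairwise_sort _).imp_of_mem fun hi hj =>
      hR _ (s.mem_sort _ |>.1 hi) _ (s.mem_sort _ |>.1 hj)

theorem List.Nodup.injOn_getD {α : Type*} {l : List α} (h : l.Nodup) (d : α) :
    Set.InjOn (l.getD · d) (Set.Iio l.length) := by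
  intro i hi j hj hij
  simp only [Set.mem_Iio] at hi hj
  simp only [List.getD_eq_getElem _ _ hi, List.getD_eq_getElem _ _ hj] at hij
  exact h.getElem_inj_iff.1 hij

section Sections

variable {F : Type*} [Field F] [DecidableEq F] {Ξ : Finset (F × F)}

@[simp]
theorem mem_Hsec {a b : F} : a ∈ Hsec Ξ b ↔ (a, b) ∈ Ξ := by
  simp [Hsec]

@[simp]
theorem mem_Vsec {a b : F} : b ∈ Vsec Ξ a ↔ (a, b) ∈ Ξ := by
  simp [Vsec]

variable (Ξ) in
def HasNestedHsecs : Prop :=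
  ∃ L : List F, L.Nodup ∧ L.toFinset = Ξ.image Prod.snd ∧
    L.Pairwise (fun b₁ b₂ => Hsec Ξ b₂ ⊆ Hsec Ξ b₁)

variable (Ξ) in
def HasNestedVsecs : Prop :=
  ∃ L : List F, L.Nodup ∧ L.toFinset = Ξ.image Prod.fst ∧
    L.Pairwise (fun a₁ a₂ => Vsec Ξ a₂ ⊆ Vsec Ξ a₁)

theorem Vsec_eq_Hsec_image_swap (a : F) : Vsec Ξ a = Hsec (Ξ.image Prod.swap) a := by
  ext b
  simp

theorem hasNestedVsecs_iff_hasNestedHsecs_image_swap :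
    HasNestedVsecs Ξ ↔ HasNestedHsecs (Ξ.image Prod.swap) := by
  simp only [HasNestedVsecs, HasNestedHsecs, Vsec_eq_Hsec_image_swap, image_image]
  rfl

theorem mem_of_pairwise_Hsec_subset {L : List F}
    (hL : L.Pairwise (fun b₁ b₂ => Hsec Ξ b₂ ⊆ Hsec Ξ b₁)) {a : F} {i j : ℕ} (hij : i ≤ j)
    (hj : j < L.length) (h : (a, L[j]) ∈ Ξ) : (a, L[i]) ∈ Ξ := by
  rcases hij.eq_or_lt with rfl | hlt
  · exact h
  · exact mem_Hsec.1 <| List.pairwise_iff_getElem.1 hL i j (hlt.trans hj) hj hlt (mem_Hsec.2 h)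

theorem mem_of_pairwise_Vsec_subset {M : List F}
    (hM : M.Pairwise (fun a₁ a₂ => Vsec Ξ a₂ ⊆ Vsec Ξ a₁)) {b : F} {i j : ℕ} (hij : i ≤ j)
    (hj : j < M.length) (h : (M[j], b) ∈ Ξ) : (M[i], b) ∈ Ξ := by
  rcases hij.eq_or_lt with rfl | hlt
  · exact h
  · exact mem_Vsec.1 <| List.pairwise_iff_getElem.1 hM i j (hlt.trans hj) hj hlt (mem_Vsec.2 h)

end Sections

section Cartesian

variable {F : Type*} [Field F] [DecidableEq F] {A : Finset (ℕ × ℕ)} {Ξ : Finset (F × F)}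

theorem Finset.mem_image_swap_s1 {α β : Type*} [DecidableEq α] [DecidableEq β]
    {s : Finset (α × β)} {p : β × α} : p ∈ s.image Prod.swap ↔ p.swap ∈ s := by
  rw [← Prod.swap_swap p, Prod.swap_injective.mem_finset_image, Prod.swap_swap]

theorem IsCartesianWith.image_swap (h : IsCartesianWith A Ξ) :
    IsCartesianWith (A.image Prod.swap) (Ξ.image Prod.swap) := by
  obtain ⟨hA, x, y, hx, hy, rfl⟩ := h
  refine ⟨fun a ha b h₁ h₂ => ?_, y, x, ?_, ?_, by simp only [image_image]; rfl⟩
  · rw [mem_image_swap_s1] at ha ⊢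
    exact hA _ ha _ h₂ h₁
  · simpa only [mem_image_swap_s1, Prod.swap_prod_mk] using hy
  · simpa only [mem_image_swap_s1, Prod.swap_prod_mk] using hx

theorem IsCartesianWith.hasNestedHsecs (h : IsCartesianWith A Ξ) : HasNestedHsecs Ξ := by
  obtain ⟨hA, x, y, -, hy, rfl⟩ := h
  have hrows : ∀ j ∈ A.image Prod.snd, ∃ i, (i, j) ∈ A := by simp
  have hnested : ∀ j₁ ∈ A.image Prod.snd, ∀ j₂ ∈ A.image Prod.snd, j₁ ≤ j₂ →
      Hsec (A.image fun ij => (x ij.1, y ij.2)) (y j₂) ⊆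
        Hsec (A.image fun ij => (x ij.1, y ij.2)) (y j₁) := by
    intro j₁ _ j₂ h₂ hle a ha
    simp only [mem_Hsec, mem_image, Prod.mk.injEq, Prod.exists] at ha ⊢
    obtain ⟨i, j, hij, rfl, hj⟩ := ha
    obtain rfl : j = j₂ := hy ⟨i, hij⟩ (hrows _ h₂) hj
    exact ⟨i, j₁, hA _ hij (i, j₁) le_rfl hle, rfl, rfl⟩
  obtain ⟨L, hL, hLΞ, hLp⟩ := (A.image Prod.snd).exists_nodup_pairwise_image
    (R := fun b₁ b₂ => Hsec _ b₂ ⊆ Hsec _ b₁) (fun j₁ h₁ j₂ h₂ => hy (hrows j₁ h₁) (hrows j₂ h₂)) hnested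
  exact ⟨L, hL, by rw [hLΞ, image_image, image_image]; rfl, hLp⟩

end Cartesian

section Converse

variable {F : Type*} [Field F] [DecidableEq F] {Ξ : Finset (F × F)} {L M : List F}

-- The default `0` is never read: both indices stay below the lengths of the lists.
variable (Ξ) in
def gridIndices (M L : List F) : Finset (ℕ × ℕ) :=
  (range M.length ×ˢ range L.length).filter fun ij => (M.getD ij.1 0, L.getD ij.2 0) ∈ Ξ

theorem mem_gridIndices {i j : ℕ} :
    (i, j) ∈ gridIndices Ξ M L ↔ ∃ (hi : i < M.length) (hj : j < L.length), (M[i], L[j]) ∈ Ξ := by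
  simp only [gridIndices, mem_filter, mem_product, mem_range]
  constructor
  · rintro ⟨⟨hi, hj⟩, h⟩
    rw [List.getD_eq_getElem _ _ hi, List.getD_eq_getElem _ _ hj] at h
    exact ⟨hi, hj, h⟩
  · rintro ⟨hi, hj, h⟩
    rw [← List.getD_eq_getElem _ 0 hi, ← List.getD_eq_getElem _ 0 hj] at h
    exact ⟨⟨hi, hj⟩, h⟩

theorem isLowerSet2_gridIndices (hL : L.Pairwise (fun b₁ b₂ => Hsec Ξ b₂ ⊆ Hsec Ξ b₁))
    (hM : M.Pairwise (fun a₁ a₂ => Vsec Ξ a₂ ⊆ Vsec Ξ a₁)) : IsLowerSet2 (gridIndices Ξ M L) := by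
  rintro ⟨i, j⟩ hij ⟨i', j'⟩ hi' hj'
  obtain ⟨hi, hj, h⟩ := mem_gridIndices.1 hij
  exact mem_gridIndices.2 ⟨hi'.trans_lt hi, hj'.trans_lt hj,
    mem_of_pairwise_Vsec_subset hM hi' hi (mem_of_pairwise_Hsec_subset hL hj' hj h)⟩

theorem eq_image_gridIndices (hL : L.toFinset = Ξ.image Prod.snd)
    (hM : M.toFinset = Ξ.image Prod.fst) :
    Ξ = (gridIndices Ξ M L).image fun ij => (M.getD ij.1 0, L.getD ij.2 0) := by
  ext ⟨a, b⟩
  simp only [mem_image, Prod.exists, Prod.mk.injEq]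
  constructor
  · intro hab
    obtain ⟨i, hi, rfl⟩ := List.mem_iff_getElem.1 <| List.mem_toFinset.1 <|
      hM ▸ mem_image_of_mem Prod.fst hab
    obtain ⟨j, hj, rfl⟩ := List.mem_iff_getElem.1 <| List.mem_toFinset.1 <|
      hL ▸ mem_image_of_mem Prod.snd hab
    exact ⟨i, j, mem_gridIndices.2 ⟨hi, hj, hab⟩, List.getD_eq_getElem _ _ hi,
      List.getD_eq_getElem _ _ hj⟩
  · rintro ⟨i, j, hij, rfl, rfl⟩
    obtain ⟨hi, hj, h⟩ := mem_gridIndices.1 hij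
    rwa [List.getD_eq_getElem _ _ hi, List.getD_eq_getElem _ _ hj]

theorem isCartesian_of_hasNestedHsecs_of_hasNestedVsecs (hH : HasNestedHsecs Ξ)
    (hV : HasNestedVsecs Ξ) : IsCartesian Ξ := by
  obtain ⟨L, hLnd, hL, hLp⟩ := hH
  obtain ⟨M, hMnd, hM, hMp⟩ := hV
  refine ⟨gridIndices Ξ M L, isLowerSet2_gridIndices hLp hMp, _, _,
    (hMnd.injOn_getD 0).mono ?_, (hLnd.injOn_getD 0).mono ?_, eq_image_gridIndices hL hM⟩
  · rintro i ⟨j, h⟩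
    exact (mem_gridIndices.1 h).1
  · rintro j ⟨i, h⟩
    exact (mem_gridIndices.1 h).2.1

end Converse

/-- `Ξ` is cartesian iff for suitable orderings of the horizontal
and vertical lines (necessarily by nonincreasing numbers of points) the horizontal
sections are nested and the vertical sections are nested. -/
theorem cartesian_iff_nested_sections {F : Type*} [Field F] [DecidableEq F]
    (Ξ : Finset (F × F)) :
    IsCartesian Ξ ↔
      ((∃ L : List F, L.Nodup ∧ L.toFinset = Ξ.image Prod.snd ∧
          L.Pairwise (fun b₁ b₂ => Hsec Ξ b₂ ⊆ Hsec Ξ b₁)) ∧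
        (∃ L : List F, L.Nodup ∧ L.toFinset = Ξ.image Prod.fst ∧
          L.Pairwise (fun a₁ a₂ => Vsec Ξ a₂ ⊆ Vsec Ξ a₁))) := by
  change IsCartesian Ξ ↔ HasNestedHsecs Ξ ∧ HasNestedVsecs Ξ
  refine ⟨fun ⟨_, hA⟩ => ⟨hA.hasNestedHsecs, ?_⟩, fun ⟨hH, hV⟩ =>
    isCartesian_of_hasNestedHsecs_of_hasNestedVsecs hH hV⟩
  exact hasNestedVsecs_iff_hasNestedHsecs_image_swap.2 hA.image_swap.hasNestedHsecs
end

section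
/- Given a cartesian set Ξ ⊂ F², there exists a unique lower set A ⊂ ℕ₀² such that Ξ is A-cartesian and the Lagrange interpolation scheme (Ξ, A) is regular, i.e. the span of the monomials {x^i y^j : (i,j) ∈ A} is an interpolation space for Ξ: for any prescribed values on Ξ there is a unique polynomial in this span matching them. -/
open MvPolynomial Finset

/-!
If `Ξ = {(x i, y j) : (i, j) ∈ A}`, the Newton polynomials
`∏_{k<i} (X - x k) * ∏_{l<j} (Y - y l)`, `(i, j) ∈ A`, lie in the span of the monomials of `A`
(as `A` is a lower set), and their values at the nodes `(x a, y b)` form a matrix that is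
triangular for the componentwise order on `A`, with nonzero diagonal. So evaluating Newton
combinations at the nodes is an injective, hence bijective, endomorphism of `A → F`; as the
monomial span has dimension at most `#A`, it is the span of the Newton polynomials, and evaluation
on it is bijective.

For uniqueness, the horizontal lines through `Ξ` carry as many points as the rows of `A`, and
a lower set is recovered from its row lengths: `(i, j) ∈ A` iff more than `j` rows are longer
than `i`.
-/

section Newton

variable {F : Type*} [Field F]

instance (A : Finset (ℕ × ℕ)) : FiniteDimensional F (monSpan F A) := by
  classical
  rw [monSpan, ← Finset.coe_image]
  infer_instance

lemma finrank_monSpan_le (A : Finset (ℕ × ℕ)) : Module.finrank F (monSpan F A) ≤ #A := by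
  classical
  rw [monSpan, ← Finset.coe_image]
  exact (finrank_span_finset_le_card _).trans card_image_le

lemma evalAt_aeval_mul_aeval (ξ : F × F) (p q : Polynomial F) :
    evalAt ξ (Polynomial.aeval (X 0) p * Polynomial.aeval (X 1) q) =
      p.eval ξ.1 * q.eval ξ.2 := by
  have hC : (MvPolynomial.eval ![ξ.1, ξ.2]).comp C = RingHom.id F := eval₂Hom_comp_C _ _
  simp [evalAt, Polynomial.aeval_def, Polynomial.hom_eval₂, hC]

lemma aeval_mul_aeval_mem_monSpan {A : Finset (ℕ × ℕ)} (hA : IsLowerSet2 A)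
    {p q : Polynomial F} (h : (p.natDegree, q.natDegree) ∈ A) :
    Polynomial.aeval (X 0) p * Polynomial.aeval (X 1) q ∈ monSpan F A := by
  rw [Polynomial.aeval_eq_sum_range, Polynomial.aeval_eq_sum_range, Finset.sum_mul_sum]
  refine Submodule.sum_mem _ fun k hk => Submodule.sum_mem _ fun l hl => ?_
  rw [smul_mul_smul_comm]
  refine Submodule.smul_mem _ _ (Submodule.subset_span ⟨(k, l), hA _ h _ ?_ ?_, rfl⟩)
  · exact Nat.lt_succ_iff.mp (mem_range.mp hk)
  · exact Nat.lt_succ_iff.mp (mem_range.mp hl)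

variable {x y : ℕ → F} {A : Finset (ℕ × ℕ)}

noncomputable def newtonPoly (x y : ℕ → F) (ij : ℕ × ℕ) : MvPolynomial (Fin 2) F :=
  Polynomial.aeval (X 0) (Lagrange.nodal (range ij.1) x) *
    Polynomial.aeval (X 1) (Lagrange.nodal (range ij.2) y)

lemma newtonPoly_mem_monSpan (hA : IsLowerSet2 A) {ij : ℕ × ℕ} (h : ij ∈ A) :
    newtonPoly x y ij ∈ monSpan F A :=
  aeval_mul_aeval_mem_monSpan hA (by simpa [Lagrange.natDegree_nodal] using h)

lemma evalAt_newtonPoly_of_not_le {ij ab : ℕ × ℕ} (h : ¬ ij ≤ ab) :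
    evalAt (x ab.1, y ab.2) (newtonPoly x y ij) = 0 := by
  rw [newtonPoly, evalAt_aeval_mul_aeval]
  rcases not_and_or.mp (Prod.le_def.not.mp h) with h | h
  · exact mul_eq_zero_of_left (Lagrange.eval_nodal_at_node (mem_range.mpr (not_le.mp h))) _
  · exact mul_eq_zero_of_right _ (Lagrange.eval_nodal_at_node (mem_range.mpr (not_le.mp h)))

lemma evalAt_newtonPoly_self_ne_zero (hA : IsLowerSet2 A)
    (hx : Set.InjOn x {i | ∃ j, (i, j) ∈ A}) (hy : Set.InjOn y {j | ∃ i, (i, j) ∈ A})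
    {ij : ℕ × ℕ} (h : ij ∈ A) : evalAt (x ij.1, y ij.2) (newtonPoly x y ij) ≠ 0 := by
  rw [newtonPoly, evalAt_aeval_mul_aeval]
  refine mul_ne_zero (Lagrange.eval_nodal_not_at_node fun k hk => ?_)
    (Lagrange.eval_nodal_not_at_node fun l hl => ?_)
  · have hk := mem_range.mp hk
    exact hx.ne ⟨ij.2, h⟩ ⟨ij.2, hA _ h (k, ij.2) hk.le le_rfl⟩ hk.ne'
  · have hl := mem_range.mp hl
    exact hy.ne ⟨ij.1, h⟩ ⟨ij.1, hA _ h (ij.1, l) le_rfl hl.le⟩ hl.ne'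

variable (x y A) in
noncomputable def evalNodes : MvPolynomial (Fin 2) F →ₗ[F] (A → F) :=
  LinearMap.pi fun ab => (MvPolynomial.aeval ![x ab.1.1, y ab.1.2]).toLinearMap

lemma evalNodes_apply (p : MvPolynomial (Fin 2) F) (ab : A) :
    evalNodes x y A p ab = evalAt (x ab.1.1, y ab.1.2) p := by
  simp [evalNodes, evalAt]

variable (x y A) in
noncomputable def newtonCombination : (A → F) →ₗ[F] MvPolynomial (Fin 2) F :=
  Fintype.linearCombination F fun ij : A => newtonPoly x y ij

variable (hA : IsLowerSet2 A)
    (hx : Set.InjOn x {i | ∃ j, (i, j) ∈ A}) (hy : Set.InjOn y {j | ∃ i, (i, j) ∈ A})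
include hA hx hy

lemma injective_evalNodes_comp_newtonCombination :
    Function.Injective (evalNodes x y A ∘ₗ newtonCombination x y A) := by
  rw [← LinearMap.ker_eq_bot, LinearMap.ker_eq_bot']
  intro c hc
  funext ab
  induction ab using WellFoundedLT.induction with
  | _ ab ih =>
    have hab := congrFun hc ab
    simp only [LinearMap.comp_apply, newtonCombination, Fintype.linearCombination_apply,
      evalNodes_apply, evalAt, map_sum, smul_eval, Pi.zero_apply] at hab
    rw [Finset.sum_eq_single ab] at hab
    · exact (mul_eq_zero.mp hab).resolve_right (evalAt_newtonPoly_self_ne_zero hA hx hy ab.2)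
    · intro ij _ hne
      by_cases hle : ij ≤ ab
      · rw [ih ij (lt_of_le_of_ne hle hne), Pi.zero_apply, zero_mul]
      · exact mul_eq_zero_of_right _
          (evalAt_newtonPoly_of_not_le (Subtype.coe_le_coe.not.mpr hle))
    · exact fun h => absurd (mem_univ ab) h

lemma range_newtonCombination :
    LinearMap.range (newtonCombination x y A) = monSpan F A := by
  have hle : LinearMap.range (newtonCombination x y A) ≤ monSpan F A := by
    rw [newtonCombination, Fintype.range_linearCombination, Submodule.span_le]
    rintro _ ⟨ij, rfl⟩
    exact newtonPoly_mem_monSpan hA ij.2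
  refine Submodule.eq_of_le_of_finrank_le hle ?_
  have hinj := injective_evalNodes_comp_newtonCombination hA hx hy
  rw [LinearMap.coe_comp] at hinj
  rw [LinearMap.finrank_range_of_inj hinj.of_comp, Module.finrank_fintype_fun_eq_card,
    Fintype.card_coe]
  exact finrank_monSpan_le A

lemma eq_zero_of_mem_monSpan_of_evalNodes_eq_zero {p : MvPolynomial (Fin 2) F}
    (hp : p ∈ monSpan F A) (h : evalNodes x y A p = 0) : p = 0 := by
  obtain ⟨c, rfl⟩ := (range_newtonCombination hA hx hy).ge hp
  have hc : c = 0 :=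
    (injective_evalNodes_comp_newtonCombination hA hx hy).eq_iff' (map_zero _) |>.mp h
  rw [hc, map_zero]

lemma exists_mem_monSpan_evalNodes_eq (v : A → F) :
    ∃ p ∈ monSpan F A, evalNodes x y A p = v := by
  obtain ⟨c, hc⟩ :=
    LinearMap.injective_iff_surjective.mp (injective_evalNodes_comp_newtonCombination hA hx hy) v
  exact ⟨_, range_newtonCombination hA hx hy ▸ LinearMap.mem_range_self _ c, hc⟩

end Newton

theorem isRegularScheme_of_isCartesianWith {F : Type*} [Field F] [DecidableEq F]
    {A : Finset (ℕ × ℕ)} {Ξ : Finset (F × F)} (h : IsCartesianWith A Ξ) :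
    IsRegularScheme Ξ A := by
  obtain ⟨hA, x, y, hx, hy, rfl⟩ := h
  have hnodes {p : MvPolynomial (Fin 2) F} {f : F × F → F} :
      (∀ ξ ∈ A.image fun ij => (x ij.1, y ij.2), evalAt ξ p = f ξ) ↔
        evalNodes x y A p = fun ab => f (x ab.1.1, y ab.1.2) := by
    simp only [forall_mem_image, funext_iff, evalNodes_apply, Subtype.forall]
  intro f
  obtain ⟨p, hp, hpf⟩ :=
    exists_mem_monSpan_evalNodes_eq hA hx hy fun ab => f (x ab.1.1, y ab.1.2)
  refine ⟨p, ⟨hp, hnodes.mpr hpf⟩, fun q ⟨hq, hqf⟩ => ?_⟩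
  rw [← sub_eq_zero]
  refine eq_zero_of_mem_monSpan_of_evalNodes_eq_zero hA hx hy (sub_mem hq hp) ?_
  rw [map_sub, hnodes.mp hqf, hpf, sub_self]

lemma mem_iff_lt_card_of_isLowerSet {s : Finset ℕ} (hs : IsLowerSet (s : Set ℕ)) {n : ℕ} :
    n ∈ s ↔ n < #s := by
  obtain ⟨a, ha⟩ :=
    hs.eq_univ_or_Iio.resolve_left fun h => Set.infinite_univ (h ▸ s.finite_toSet)
  obtain rfl : s = range a := coe_injective (ha.trans (coe_range a).symm)
  simp

namespace IsLowerSet2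

variable {A : Finset (ℕ × ℕ)} (hA : IsLowerSet2 A)
include hA

lemma mem_iff_lt_card_filter_snd {i j : ℕ} : (i, j) ∈ A ↔ i < #(A.filter (·.2 = j)) := by
  set s := (A.filter (·.2 = j)).image Prod.fst
  have hs (k : ℕ) : k ∈ s ↔ (k, j) ∈ A := by simp [s]
  have hcard : #s = #(A.filter (·.2 = j)) := card_image_of_injOn fun p hp q hq h =>
    Prod.ext h ((mem_filter.mp hp).2.trans (mem_filter.mp hq).2.symm)
  rw [← hs, mem_iff_lt_card_of_isLowerSet, hcard]
  intro a b hba ha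
  simp only [mem_coe, hs] at ha ⊢
  exact hA _ ha _ hba le_rfl

lemma mem_iff_lt_countP_rowCountsA {i j : ℕ} :
    (i, j) ∈ A ↔ j < (rowCountsA A).countP (i < ·) := by
  simp_rw [rowCountsA, Multiset.countP_map, ← hA.mem_iff_lt_card_filter_snd]
  set s := (A.image Prod.snd).filter fun k => (i, k) ∈ A
  have hs (k : ℕ) : k ∈ s ↔ (i, k) ∈ A := by
    simpa [s] using fun h => ⟨i, h⟩
  rw [← hs, mem_iff_lt_card_of_isLowerSet]
  · rfl
  intro a b hba ha
  simp only [mem_coe, hs] at ha ⊢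
  exact hA _ ha _ le_rfl hba

lemma eq_of_rowCountsA_eq {A' : Finset (ℕ × ℕ)} (hA' : IsLowerSet2 A')
    (h : rowCountsA A = rowCountsA A') : A = A' := by
  ext ⟨i, j⟩
  rw [hA.mem_iff_lt_countP_rowCountsA, hA'.mem_iff_lt_countP_rowCountsA, h]

end IsLowerSet2

lemma rowCountsA_eq_rowCounts {F : Type*} [Field F] [DecidableEq F] {A : Finset (ℕ × ℕ)}
    {Ξ : Finset (F × F)} (h : IsCartesianWith A Ξ) : rowCountsA A = rowCounts Ξ := by
  obtain ⟨-, x, y, hx, hy, rfl⟩ := h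
  set φ : ℕ × ℕ → F × F := fun ij => (x ij.1, y ij.2)
  have hφ : Set.InjOn φ A := fun p hp q hq hpq =>
    Prod.ext (hx ⟨_, hp⟩ ⟨_, hq⟩ (Prod.ext_iff.mp hpq).1)
      (hy ⟨_, hp⟩ ⟨_, hq⟩ (Prod.ext_iff.mp hpq).2)
  have hyinj : Set.InjOn y (A.image Prod.snd) := fun a ha b hb hab =>
    hy (by simpa using ha) (by simpa using hb) hab
  have hrow : ∀ j ∈ A.image Prod.snd,
      (A.image φ).filter (·.2 = y j) = (A.filter (·.2 = j)).image φ := by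
    intro j hj
    rw [filter_image]
    exact congrArg _ (filter_congr fun p hp => hyinj.eq_iff (mem_image_of_mem _ hp) hj)
  rw [rowCounts, image_image, show Prod.snd ∘ φ = y ∘ Prod.snd from rfl, ← image_image,
    image_val_of_injOn hyinj, Multiset.map_map, rowCountsA]
  refine Multiset.map_congr rfl fun j hj => ?_
  rw [Function.comp_apply, hrow j hj, card_image_of_injOn (hφ.mono (filter_subset _ _))]

theorem IsCartesianWith.eq {F : Type*} [Field F] [DecidableEq F] {A A' : Finset (ℕ × ℕ)}
    {Ξ : Finset (F × F)} (h : IsCartesianWith A Ξ) (h' : IsCartesianWith A' Ξ) : A = A' :=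
  h.1.eq_of_rowCountsA_eq h'.1 <|
    (rowCountsA_eq_rowCounts h).trans (rowCountsA_eq_rowCounts h').symm

/-- For a cartesian set `Ξ` there is a unique lower set `A`
such that `Ξ` is `A`-cartesian and the Lagrange interpolation scheme `(Ξ, A)`
is regular. -/
theorem unique_regular_lower_set_of_cartesian {F : Type*} [Field F] [DecidableEq F]
    (Ξ : Finset (F × F)) (hΞ : IsCartesian Ξ) :
    ∃! A : Finset (ℕ × ℕ), IsCartesianWith A Ξ ∧ IsRegularScheme Ξ A := by
  obtain ⟨A, hA⟩ := hΞ
  exact ⟨A, ⟨hA, isRegularScheme_of_isCartesianWith hA⟩, fun _ ⟨hA', _⟩ => hA'.eq hA⟩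
end

section
/- Let Ξ = {u_{mn}^x = (x_{mn}, y_{mn}) : (m,n) ∈ S_x(Ξ)} be a finite point set indexed by the lower set S_x(Ξ) obtained from horizontal lines, so that points with the same second index n lie on a common horizontal line (y_{mn} = y_{0n}) and points on each line have distinct abscissae. Define φ_{ij}^x := φ-coefficient · ∏_{t=0}^{j-1}(y − y_{0t}) · ∏_{s=0}^{i-1}(x − x_{sj}), normalized so that φ_{ij}^x(u_{ij}^x) = 1. Then φ_{ij}^x(u_{mn}^x) = δ_{(i,j),(m,n)} whenever (i,j) ⪰_inlex (m,n). -/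
open MvPolynomial Finset

/-!
`φ_{ij}(u_{mn})` splits into a `y`-ratio times an `x`-ratio of one-variable Newton products.
If `n < j` the `y`-numerator contains the factor `y_{0n} - y_{0n}`; if `n = j` and `m < i` the
`x`-numerator contains `x_{mn} - x_{mn}`; and at `(m, n) = (i, j)` both ratios are `1`, the
denominators being nonzero by the distinctness hypotheses.
-/

theorem IsLowerSet2.mem_of_le {A : Finset (ℕ × ℕ)} (hA : IsLowerSet2 A) {a b c d : ℕ}
    (hab : (a, b) ∈ A) (hc : c ≤ a) (hd : d ≤ b) : (c, d) ∈ A :=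
  hA (a, b) hab (c, d) hc hd

theorem prod_range_sub_eq_zero_of_lt {R : Type*} [CommRing R] (b : ℕ → R) {l k : ℕ}
    (hlk : l < k) : ∏ t ∈ range k, (b l - b t) = 0 :=
  prod_eq_zero (mem_range.2 hlk) (sub_self _)

theorem prod_range_sub_ne_zero {R : Type*} [CommRing R] [IsDomain R] (b : ℕ → R) {k : ℕ}
    (hb : ∀ t < k, b t ≠ b k) : ∏ t ∈ range k, (b k - b t) ≠ 0 :=
  prod_ne_zero_iff.2 fun t ht => sub_ne_zero.2 (hb t (mem_range.1 ht)).symm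

theorem newton_duality_inlex_general {F : Type*} [Field F]
    (S : Finset (ℕ × ℕ)) (hS : IsLowerSet2 S)
    (u : ℕ × ℕ → F × F)
    -- points with the same second index lie on a common horizontal line
    (hy : ∀ m n, (m, n) ∈ S → (u (m, n)).2 = (u (0, n)).2)
    -- the line ordinates are pairwise distinct
    (hyd : ∀ n n', (0, n) ∈ S → (0, n') ∈ S → (u (0, n)).2 = (u (0, n')).2 → n = n')
    -- on each line the abscissae are pairwise distinct
    (hxd : ∀ m m' n, (m, n) ∈ S → (m', n) ∈ S → (u (m, n)).1 = (u (m', n)).1 → m = m')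
    (φ : ℕ → ℕ → F × F → F)
    (hφ : ∀ i j ξ, φ i j ξ =
      ((∏ t ∈ Finset.range j, ((u (0, j)).2 - (u (0, t)).2)) *
          ∏ s ∈ Finset.range i, ((u (i, j)).1 - (u (s, j)).1))⁻¹ *
        ((∏ t ∈ Finset.range j, (ξ.2 - (u (0, t)).2)) *
          ∏ s ∈ Finset.range i, (ξ.1 - (u (s, j)).1)))
    (i j m n : ℕ) (hmn : (m, n) ∈ S)
    (hord : n < j ∨ (n = j ∧ m ≤ i)) :
    φ i j (u (m, n)) = if (i, j) = (m, n) then 1 else 0 := by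
  rw [hφ, hy m n hmn, mul_inv, mul_mul_mul_comm]
  rcases hord with hnj | ⟨rfl, hmi⟩
  · rw [prod_range_sub_eq_zero_of_lt (fun t => (u (0, t)).2) hnj, if_neg (by grind)]
    ring
  obtain hmi | rfl := hmi.lt_or_eq
  · rw [prod_range_sub_eq_zero_of_lt (fun s => (u (s, n)).1) hmi,
      if_neg (by grind)]
    ring
  · have hcol : ∀ t ≤ n, (0, t) ∈ S := fun t ht => hS.mem_of_le hmn (Nat.zero_le m) ht
    have hy_ne : ∀ t < n, (u (0, t)).2 ≠ (u (0, n)).2 := fun t ht h =>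
      ht.ne (hyd t n (hcol t ht.le) (hcol n le_rfl) h)
    have hx_ne : ∀ s < m, (u (s, n)).1 ≠ (u (m, n)).1 := fun s hs h =>
      hs.ne (hxd s m n (hS.mem_of_le hmn hs.le le_rfl) hmn h)
    rw [inv_mul_cancel₀ (prod_range_sub_ne_zero (fun t => (u (0, t)).2) hy_ne),
      inv_mul_cancel₀ (prod_range_sub_ne_zero (fun s => (u (s, n)).1) hx_ne), if_pos rfl,
      one_mul]

/-- The Newton-type polynomials `φ_{ij}^x` attached to a point set
indexed by the lower set `S_x(Ξ)` satisfy `φ_{ij}^x(u_{mn}^x) = δ_{(i,j),(m,n)}`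
whenever `(i,j) ⪰_inlex (m,n)`. -/
theorem newton_duality_inlex {F : Type*} [Field F]
    (S : Finset (ℕ × ℕ)) (hS : IsLowerSet2 S)
    (u : ℕ × ℕ → F × F)
    -- points with the same second index lie on a common horizontal line
    (hy : ∀ m n, (m, n) ∈ S → (u (m, n)).2 = (u (0, n)).2)
    -- the line ordinates are pairwise distinct
    (hyd : ∀ n n', (0, n) ∈ S → (0, n') ∈ S → (u (0, n)).2 = (u (0, n')).2 → n = n')
    -- on each line the abscissae are pairwise distinct
    (hxd : ∀ m m' n, (m, n) ∈ S → (m', n) ∈ S → (u (m, n)).1 = (u (m', n)).1 → m = m')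
    (φ : ℕ → ℕ → F × F → F)
    (hφ : ∀ i j ξ, φ i j ξ =
      ((∏ t ∈ Finset.range j, ((u (0, j)).2 - (u (0, t)).2)) *
          ∏ s ∈ Finset.range i, ((u (i, j)).1 - (u (s, j)).1))⁻¹ *
        ((∏ t ∈ Finset.range j, (ξ.2 - (u (0, t)).2)) *
          ∏ s ∈ Finset.range i, (ξ.1 - (u (s, j)).1)))
    (i j m n : ℕ) (hij : (i, j) ∈ S) (hmn : (m, n) ∈ S)
    (hord : n < j ∨ (n = j ∧ m ≤ i)) :
    φ i j (u (m, n)) = if (i, j) = (m, n) then 1 else 0 :=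
  newton_duality_inlex_general S hS u hy hyd hxd φ hφ i j m n hmn hord
end

section
/- Let Ξ ⊂ F² be a finite set of distinct points with associated lower set S_x(Ξ). Then Span_F{x^i y^j : (i,j) ∈ S_x(Ξ)} is a degree reducing interpolation space with respect to the lexicographic order: it is an interpolation space for Ξ, and the Lagrange projector L onto it satisfies δ(Lq) ⪯_lex δ(q) for every polynomial q ∈ F[x,y], where δ denotes the exponent of the ≺_lex-leading monomial. -/
open MvPolynomial Finset

/-!
View `p ∈ F[x, y]` as a polynomial in `x` over `F[y]`: its `≺_lex`-leading exponent is `(α, β)`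
with `α = deg_x p` and `β` the degree of its leading coefficient. If `p ≠ 0` vanishes on `Ξ`,
then on every horizontal line `y = b` carrying more than `α` points of `Ξ` the slice `p(·, b)`
vanishes, so `b` is a root of the leading coefficient; hence at most `β` lines carry more than
`α` points. But `S` has the row lengths of `Ξ`, and if `(α, β) ∈ S` then rows `0, …, β` of the
lower set `S` all have more than `α` cells. So no nonzero polynomial vanishing on `Ξ` has its
leading exponent in `S`. This makes evaluation on the span injective, hence bijective as
`|S| = |Ξ|`; and if `Lq ≻_lex q`, then `Lq - q` vanishes on `Ξ` with the leading exponent of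
`Lq`, which lies in `S`.
-/

lemma card_eq_sum_rowCounts {F : Type*} [Field F] [DecidableEq F] (Ξ : Finset (F × F)) :
    Ξ.card = (rowCounts Ξ).sum :=
  card_eq_sum_card_image Prod.snd Ξ

lemma card_eq_sum_rowCountsA (A : Finset (ℕ × ℕ)) : A.card = (rowCountsA A).sum :=
  card_eq_sum_card_image Prod.snd A

lemma IsSx.card_eq {F : Type*} [Field F] [DecidableEq F] {Ξ : Finset (F × F)}
    {S : Finset (ℕ × ℕ)} (hS : IsSx Ξ S) : S.card = Ξ.card := by
  rw [card_eq_sum_rowCountsA, card_eq_sum_rowCounts, hS.2]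

lemma IsLowerSet2.lt_countP_rowCountsA {A : Finset (ℕ × ℕ)} (hA : IsLowerSet2 A) {α β : ℕ}
    (h : (α, β) ∈ A) : β < (rowCountsA A).countP (α < ·) := by
  have hrow : ∀ j ≤ β, α < (A.filter fun p => p.2 = j).card := by
    intro j hj
    have hsub : (range (α + 1)).map (Function.Embedding.sectL ℕ j) ⊆
        A.filter fun p => p.2 = j := by
      intro p hp
      obtain ⟨i, hi, rfl⟩ := mem_map.mp hp
      exact mem_filter.mpr ⟨hA _ h _ (Nat.lt_succ_iff.mp (mem_range.mp hi)) hj, rfl⟩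
    exact ((card_map _).trans (card_range _)).symm.trans_le (card_le_card hsub)
  have hrows : range (β + 1) ⊆ (A.image Prod.snd).filter fun j =>
      α < (A.filter fun p => p.2 = j).card := by
    intro j hj
    have hj := Nat.lt_succ_iff.mp (mem_range.mp hj)
    exact mem_filter.mpr ⟨mem_image_of_mem _ (hA _ h (α, j) le_rfl hj), hrow j hj⟩
  rw [rowCountsA, Multiset.countP_map]
  exact (card_range _).symm.trans_le (card_le_card hrows)

section Bivariate

variable {F : Type*} [Field F]

/-- `F[x, y] → F[y][x]`: `x` is the outer variable, so that `≺_lex` compares the outer degree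
first. -/
noncomputable def toPolyPoly : MvPolynomial (Fin 2) F →+* Polynomial (Polynomial F) :=
  eval₂Hom (Polynomial.C.comp Polynomial.C) ![Polynomial.X, Polynomial.C Polynomial.X]

lemma coeff_coeff_toPolyPoly (p : MvPolynomial (Fin 2) F) (d : Fin 2 →₀ ℕ) :
    ((toPolyPoly p).coeff (d 0)).coeff (d 1) = p.coeff d := by
  induction p using MvPolynomial.induction_on' with
  | add p q hp hq => simp [hp, hq]
  | monomial e c =>
    have hmon : toPolyPoly (monomial e c) =
        Polynomial.C (Polynomial.C c * Polynomial.X ^ e 1) * Polynomial.X ^ e 0 := by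
      simp [toPolyPoly, eval₂Hom_monomial, Finsupp.prod_fintype, Fin.prod_univ_two]
      ring
    have hext : e = d ↔ e 0 = d 0 ∧ e 1 = d 1 := by
      refine ⟨fun h => h ▸ ⟨rfl, rfl⟩, fun ⟨h0, h1⟩ => ?_⟩
      ext i; fin_cases i <;> assumption
    rw [hmon, Polynomial.coeff_C_mul_X_pow, coeff_monomial]
    simp only [hext]
    by_cases h0 : d 0 = e 0 <;> by_cases h1 : d 1 = e 1 <;>
      simp [h0, h1, eq_comm]

lemma toPolyPoly_ne_zero {p : MvPolynomial (Fin 2) F} (hp : p ≠ 0) : toPolyPoly p ≠ 0 := by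
  obtain ⟨d, hd⟩ := ne_zero_iff.mp hp
  intro h
  simp [← coeff_coeff_toPolyPoly, h] at hd

lemma evalAt_eq_eval_map_toPolyPoly (ξ : F × F) (p : MvPolynomial (Fin 2) F) :
    evalAt ξ p = ((toPolyPoly p).map (Polynomial.evalRingHom ξ.2)).eval ξ.1 := by
  have : (eval ![ξ.1, ξ.2] : MvPolynomial (Fin 2) F →+* F) = (Polynomial.evalRingHom ξ.1).comp
      ((Polynomial.mapRingHom (Polynomial.evalRingHom ξ.2)).comp toPolyPoly) := by
    ext i
    · simp [toPolyPoly]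
    · fin_cases i <;> simp [toPolyPoly]
  exact DFunLike.congr_fun this p

noncomputable def monExp (ij : ℕ × ℕ) : Fin 2 →₀ ℕ :=
  Finsupp.single 0 ij.1 + Finsupp.single 1 ij.2

@[simp] lemma monExp_apply_zero (ij : ℕ × ℕ) : monExp ij 0 = ij.1 := by simp [monExp]

@[simp] lemma monExp_apply_one (ij : ℕ × ℕ) : monExp ij 1 = ij.2 := by simp [monExp]

lemma monExp_injective : Function.Injective monExp := fun a b h =>
  Prod.ext (by simpa using DFunLike.congr_fun h 0) (by simpa using DFunLike.congr_fun h 1)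

lemma monSpan_eq_restrictSupport (A : Finset (ℕ × ℕ)) :
    monSpan F A = restrictSupport F (monExp '' A) := by
  rw [monSpan, restrictSupport_eq_span, Set.image_image]
  congr! with ij
  rw [X_pow_eq_monomial, X_pow_eq_monomial, monomial_mul, one_mul, monExp]

noncomputable def leadExp (p : MvPolynomial (Fin 2) F) : ℕ × ℕ :=
  ((toPolyPoly p).natDegree, (toPolyPoly p).leadingCoeff.natDegree)

lemma monExp_leadExp_mem_support {p : MvPolynomial (Fin 2) F} (hp : p ≠ 0) :
    monExp (leadExp p) ∈ p.support := by
  rw [mem_support_iff, ← coeff_coeff_toPolyPoly]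
  simpa [leadExp] using toPolyPoly_ne_zero hp

end Bivariate

section LexDeg

variable {F : Type*} [Field F]

lemma le_lexDeg_of_mem_support {p : MvPolynomial (Fin 2) F} {d : Fin 2 →₀ ℕ}
    (hd : d ∈ p.support) : ((toLex (d 0, d 1) : ℕ ×ₗ ℕ) : WithBot (ℕ ×ₗ ℕ)) ≤ lexDeg p :=
  le_max (mem_image_of_mem _ hd)

lemma lexDeg_eq_leadExp {p : MvPolynomial (Fin 2) F} (hp : p ≠ 0) :
    lexDeg p = toLex (leadExp p) := by
  refine le_antisymm (Finset.max_le ?_) ?_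
  · simp only [mem_image, forall_exists_index, and_imp]
    rintro _ d hd rfl
    rw [mem_support_iff, ← coeff_coeff_toPolyPoly] at hd
    have hd0 : (toPolyPoly p).coeff (d 0) ≠ 0 := fun h => hd (by rw [h, Polynomial.coeff_zero])
    rw [WithBot.coe_le_coe, Prod.Lex.le_iff]
    rcases (Polynomial.le_natDegree_of_ne_zero hd0).lt_or_eq with hlt | heq
    · exact Or.inl hlt
    · refine Or.inr ⟨heq, Polynomial.le_natDegree_of_ne_zero ?_⟩
      rwa [Polynomial.leadingCoeff, ← heq]
  · simpa using le_lexDeg_of_mem_support (monExp_leadExp_mem_support hp)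

lemma ne_zero_of_lexDeg_lt {p q : MvPolynomial (Fin 2) F} (h : lexDeg q < lexDeg p) : p ≠ 0 := by
  rintro rfl
  simp [lexDeg] at h

lemma lexDeg_sub_of_lt {p q : MvPolynomial (Fin 2) F} (h : lexDeg q < lexDeg p) :
    lexDeg (p - q) = lexDeg p := by
  have hp := ne_zero_of_lexDeg_lt h
  refine le_antisymm (Finset.max_le ?_) ?_
  · simp only [mem_image, forall_exists_index, and_imp]
    rintro _ d hd rfl
    rcases mem_union.mp (support_sub _ p q hd) with hd | hd
    · exact le_lexDeg_of_mem_support hd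
    · exact (le_lexDeg_of_mem_support hd).trans h.le
  · have hq : q.coeff (monExp (leadExp p)) = 0 := by
      by_contra hq
      have := le_lexDeg_of_mem_support (mem_support_iff.mpr hq)
      simp only [monExp_apply_zero, monExp_apply_one] at this
      exact h.not_ge (lexDeg_eq_leadExp hp ▸ this)
    have hmem : monExp (leadExp p) ∈ (p - q).support := by
      rw [mem_support_iff, coeff_sub, hq, sub_zero]
      exact mem_support_iff.mp (monExp_leadExp_mem_support hp)
    simpa [lexDeg_eq_leadExp hp] using le_lexDeg_of_mem_support hmem

lemma leadExp_mem_of_mem_monSpan {A : Finset (ℕ × ℕ)} {p : MvPolynomial (Fin 2) F}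
    (hp : p ∈ monSpan F A) (hp0 : p ≠ 0) : leadExp p ∈ A := by
  rw [monSpan_eq_restrictSupport, mem_restrictSupport_iff] at hp
  obtain ⟨ij, hij, h⟩ := hp (monExp_leadExp_mem_support hp0)
  rwa [← monExp_injective h]

end LexDeg

section Vanishing

variable {F : Type*} [Field F] [DecidableEq F]

lemma map_evalRingHom_eq_zero_of_natDegree_lt_card {Ξ : Finset (F × F)}
    {G : Polynomial (Polynomial F)}
    (hv : ∀ ξ ∈ Ξ, (G.map (Polynomial.evalRingHom ξ.2)).eval ξ.1 = 0) {b : F}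
    (hb : G.natDegree < (Ξ.filter fun p => p.2 = b).card) :
    G.map (Polynomial.evalRingHom b) = 0 := by
  have hinj : Function.Injective fun ξ : Ξ.filter (fun p => p.2 = b) => ξ.1.1 := by
    rintro ⟨ξ, hξ⟩ ⟨η, hη⟩ h
    rw [mem_filter] at hξ hη
    exact Subtype.ext (Prod.ext h (hξ.2.trans hη.2.symm))
  refine Polynomial.eq_zero_of_natDegree_lt_card_of_eval_eq_zero _ hinj (fun ⟨ξ, hξ⟩ => ?_) ?_
  · obtain ⟨hξΞ, rfl⟩ := mem_filter.mp hξ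
    exact hv ξ hξΞ
  · rw [Fintype.card_coe]
    exact Polynomial.natDegree_map_le.trans_lt hb

lemma countP_rowCounts_le_natDegree_leadingCoeff {Ξ : Finset (F × F)}
    {G : Polynomial (Polynomial F)} (hG : G ≠ 0)
    (hv : ∀ ξ ∈ Ξ, (G.map (Polynomial.evalRingHom ξ.2)).eval ξ.1 = 0) :
    (rowCounts Ξ).countP (G.natDegree < ·) ≤ G.leadingCoeff.natDegree := by
  rw [rowCounts, Multiset.countP_map]
  refine Polynomial.card_le_degree_of_subset_roots (p := G.leadingCoeff)
    (Z := (Ξ.image Prod.snd).filter fun b => G.natDegree < (Ξ.filter fun p => p.2 = b).card)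
    fun b hb => ?_
  rw [Polynomial.mem_roots (Polynomial.leadingCoeff_ne_zero.mpr hG), Polynomial.IsRoot]
  have hslice := map_evalRingHom_eq_zero_of_natDegree_lt_card hv (mem_filter.mp hb).2
  simpa using congrArg (Polynomial.coeff · G.natDegree) hslice

lemma leadExp_not_mem_of_vanishing {Ξ : Finset (F × F)} {S : Finset (ℕ × ℕ)} (hS : IsSx Ξ S)
    {g : MvPolynomial (Fin 2) F} (hg : g ≠ 0) (hv : ∀ ξ ∈ Ξ, evalAt ξ g = 0) :
    leadExp g ∉ S := fun hmem => by
  have hlt := hS.1.lt_countP_rowCountsA hmem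
  rw [hS.2] at hlt
  refine (countP_rowCounts_le_natDegree_leadingCoeff (toPolyPoly_ne_zero hg) ?_).not_gt hlt
  exact fun ξ hξ => evalAt_eq_eval_map_toPolyPoly ξ g ▸ hv ξ hξ

lemma IsSx.eq_zero_of_mem_monSpan {Ξ : Finset (F × F)} {S : Finset (ℕ × ℕ)} (hS : IsSx Ξ S)
    {p : MvPolynomial (Fin 2) F} (hp : p ∈ monSpan F S) (hv : ∀ ξ ∈ Ξ, evalAt ξ p = 0) :
    p = 0 := by
  by_contra hp0
  exact leadExp_not_mem_of_vanishing hS hp0 hv (leadExp_mem_of_mem_monSpan hp hp0)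

end Vanishing

section Regularity

variable {F : Type*} [Field F]

lemma finrank_monSpan (A : Finset (ℕ × ℕ)) : Module.finrank F (monSpan F A) = A.card := by
  rw [monSpan_eq_restrictSupport, Module.finrank_eq_nat_card_basis (basisRestrictSupport F _),
    Nat.card_image_of_injective monExp_injective, Nat.card_coe_set_eq, Set.ncard_coe_finset]

instance inst_s5 (A : Finset (ℕ × ℕ)) : FiniteDimensional F (monSpan F A) :=
  FiniteDimensional.span_of_finite F (A.finite_toSet.image _)

noncomputable def evalOnMonSpan (Ξ : Finset (F × F)) (A : Finset (ℕ × ℕ)) :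
    monSpan F A →ₗ[F] (Ξ → F) :=
  LinearMap.pi fun ξ => (aeval ![ξ.1.1, ξ.1.2]).toLinearMap ∘ₗ (monSpan F A).subtype

lemma evalOnMonSpan_apply (Ξ : Finset (F × F)) (A : Finset (ℕ × ℕ)) (p : monSpan F A)
    (ξ : Ξ) : evalOnMonSpan Ξ A p ξ = evalAt ξ p := by
  simp [evalOnMonSpan, evalAt]

lemma isRegularScheme_of_card_eq {Ξ : Finset (F × F)} {A : Finset (ℕ × ℕ)}
    (hcard : A.card = Ξ.card)
    (h : ∀ p ∈ monSpan F A, (∀ ξ ∈ Ξ, evalAt ξ p = 0) → p = 0) : IsRegularScheme Ξ A := by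
  have hinj : Function.Injective (evalOnMonSpan Ξ A) := by
    refine (injective_iff_map_eq_zero _).mpr fun p hp => Subtype.ext (h p p.2 fun ξ hξ => ?_)
    rw [← evalOnMonSpan_apply Ξ A p ⟨ξ, hξ⟩, hp, Pi.zero_apply]
  have hsurj : Function.Surjective (evalOnMonSpan Ξ A) := by
    refine (LinearMap.injective_iff_surjective_of_finrank_eq_finrank ?_).mp hinj
    rw [finrank_monSpan, Module.finrank_fintype_fun_eq_card, Fintype.card_coe, hcard]
  intro f
  obtain ⟨p, hp⟩ := hsurj fun ξ => f ξ
  refine ⟨p, ⟨p.2, fun ξ hξ => ?_⟩, fun q ⟨hq, hqf⟩ => ?_⟩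
  · rw [← evalOnMonSpan_apply Ξ A p ⟨ξ, hξ⟩, hp]
  · refine congrArg Subtype.val (hinj (a₁ := ⟨q, hq⟩) (hp.symm ▸ funext fun ξ => ?_))
    rw [evalOnMonSpan_apply, hqf ξ ξ.2]

end Regularity

/-- `Span_F{x^i y^j : (i,j) ∈ S_x(Ξ)}` is a degree reducing
interpolation space for `Ξ` w.r.t. the lexicographic order (`x` compared first):
it is an interpolation space, and the interpolant of any polynomial `q` from it
has `≺_lex`-leading exponent not exceeding that of `q`. -/
theorem Sx_span_degree_reducing_lex {F : Type*} [Field F] [DecidableEq F]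
    (Ξ : Finset (F × F)) (S : Finset (ℕ × ℕ)) (hS : IsSx Ξ S) :
    IsRegularScheme Ξ S ∧
      ∀ q p : MvPolynomial (Fin 2) F, p ∈ monSpan F S →
        (∀ ξ ∈ Ξ, evalAt ξ p = evalAt ξ q) → lexDeg p ≤ lexDeg q := by
  refine ⟨isRegularScheme_of_card_eq hS.card_eq fun p hp hv => hS.eq_zero_of_mem_monSpan hp hv,
    fun q p hp hpq => ?_⟩
  by_contra hle
  have hlt : lexDeg q < lexDeg p := not_le.mp hle
  have hp0 := ne_zero_of_lexDeg_lt hlt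
  have hr0 : p - q ≠ 0 := ne_zero_of_lexDeg_lt ((lexDeg_sub_of_lt hlt).symm ▸ hlt)
  have hlead : leadExp (p - q) = leadExp p := by
    simpa [lexDeg_eq_leadExp hr0, lexDeg_eq_leadExp hp0] using lexDeg_sub_of_lt hlt
  have hvan : ∀ ξ ∈ Ξ, evalAt ξ (p - q) = 0 := fun ξ hξ => by
    rw [evalAt, map_sub, sub_eq_zero]
    exact hpq ξ hξ
  exact leadExp_not_mem_of_vanishing hS hr0 hvan (hlead ▸ leadExp_mem_of_mem_monSpan hp hp0)
end

section
/- Let Ξ ⊂ F² be a finite set of distinct points with associated lower set S_y(Ξ). Then {x^i y^j : (i,j) ∈ S_y(Ξ)} is the Gröbner éscalier of the vanishing ideal I(Ξ) with respect to the inverse lexicographic order ≺_inlex, i.e. it is exactly the set of monomials not divisible by any leading monomial of I(Ξ) under ≺_inlex. -/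
open MvPolynomial Finset

/-!
Write `g ∈ I(Ξ)` with `≺_inlex`-leading exponent `(d₀, d₁)` as `∑ₖ cₖ(x) yᵏ`, so that
`c_{d₁} ≠ 0` has degree `d₀`. On a vertical line `x = a` carrying more than `d₁` points of `Ξ`,
`g(a, ·)` has degree at most `d₁` and more roots than that, so `c_{d₁}(a) = 0`: hence at most `d₀`
columns of `Ξ` carry more than `d₁` points. Conversely, if `m` columns carry more than `j` points,
`P(x) (yʲ + ∑ₐ Lₐ(x) Dₐ(y))` lies in `I(Ξ)` and has leading exponent `(m, j)`: `P` vanishes on the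
tall columns, `Lₐ` is the Lagrange basis of the remaining ones, and `deg Dₐ < j` with
`yʲ + Dₐ(y)` vanishing on column `a`. Since `S_y(Ξ)` is a lower set with the column heights of
`Ξ`, `(i, j) ∈ S_y(Ξ)` says exactly that more than `i` columns of `Ξ` carry more than `j` points.
-/

section Columns

variable {α β : Type*} [DecidableEq α]

def tallColumns (s : Finset (α × β)) (t : ℕ) : Finset α :=
  (s.image Prod.fst).filter fun a => t < #(s.filter fun p => p.1 = a)

lemma card_tallColumns (s : Finset (α × β)) (t : ℕ) :
    #(tallColumns s t) =
      ((s.image Prod.fst).val.map fun a => #(s.filter fun p => p.1 = a)).countP (t < ·) := by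
  rw [Multiset.countP_map]
  rfl

def column [DecidableEq β] (s : Finset (α × β)) (a : α) : Finset β :=
  (s.filter fun p => p.1 = a).image Prod.snd

lemma card_column [DecidableEq β] (s : Finset (α × β)) (a : α) :
    #(column s a) = #(s.filter fun p => p.1 = a) :=
  card_image_of_injOn fun _ hp _ hq hpq =>
    Prod.ext ((mem_filter.1 hp).2.trans (mem_filter.1 hq).2.symm) hpq

lemma mem_column [DecidableEq β] {s : Finset (α × β)} {a : α} {b : β} :
    b ∈ column s a ↔ (a, b) ∈ s := by
  simp [column]

end Columns

lemma IsLowerSet2.mem_tallColumns_iff {S : Finset (ℕ × ℕ)} (hS : IsLowerSet2 S) {k t : ℕ} :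
    k ∈ tallColumns S t ↔ (k, t) ∈ S := by
  constructor
  · intro hk
    by_contra hkt
    have hsub : (S.filter fun p => p.1 = k) ⊆ (range t).image fun u => (k, u) := by
      intro p hp
      obtain ⟨hpS, rfl⟩ := mem_filter.1 hp
      refine mem_image.2 ⟨p.2, mem_range.2 ?_, rfl⟩
      by_contra! hge
      exact hkt (hS p hpS _ le_rfl hge)
    have := (card_le_card hsub).trans card_image_le
    rw [card_range] at this
    exact absurd (mem_filter.1 hk).2 (by omega)
  · intro hkt
    refine mem_filter.2 ⟨mem_image.2 ⟨_, hkt, rfl⟩, ?_⟩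
    have hsub : (range (t + 1)).image (fun u => (k, u)) ⊆ S.filter fun p => p.1 = k := by
      intro p hp
      obtain ⟨u, hu, rfl⟩ := mem_image.1 hp
      exact mem_filter.2 ⟨hS _ hkt _ le_rfl (Nat.lt_succ_iff.1 (mem_range.1 hu)), rfl⟩
    have := card_le_card hsub
    rw [card_image_of_injective _ fun u v h => (Prod.mk.inj h).2, card_range] at this
    omega

lemma IsLowerSet2.mem_iff_lt_card_tallColumns {S : Finset (ℕ × ℕ)} (hS : IsLowerSet2 S)
    {i j : ℕ} : (i, j) ∈ S ↔ i < #(tallColumns S j) := by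
  constructor
  · intro hij
    have hsub : range (i + 1) ⊆ tallColumns S j := fun k hk =>
      hS.mem_tallColumns_iff.2 (hS _ hij _ (Nat.lt_succ_iff.1 (mem_range.1 hk)) le_rfl)
    simpa using card_le_card hsub
  · intro hlt
    by_contra hij
    have hsub : tallColumns S j ⊆ range i := fun k hk => by
      rw [mem_range]
      by_contra! hik
      exact hij (hS _ (hS.mem_tallColumns_iff.1 hk) _ hik le_rfl)
    exact hlt.not_ge (by simpa using card_le_card hsub)

lemma IsSy.mem_iff_lt_card_tallColumns {F : Type*} [Field F] [DecidableEq F]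
    {Ξ : Finset (F × F)} {S : Finset (ℕ × ℕ)} (hS : IsSy Ξ S) {i j : ℕ} :
    (i, j) ∈ S ↔ i < #(tallColumns Ξ j) := by
  have hcard : #(tallColumns S j) = #(tallColumns Ξ j) := by
    rw [card_tallColumns, card_tallColumns]
    exact congrArg _ hS.2
  rw [hS.1.mem_iff_lt_card_tallColumns, hcard]

open scoped Polynomial

lemma coeff_toMvPolynomial_zero_mul_toMvPolynomial_one {R : Type*} [CommSemiring R]
    (p q : R[X]) (e : Fin 2 →₀ ℕ) :
    (p.toMvPolynomial (0 : Fin 2) * q.toMvPolynomial 1).coeff e =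
      p.coeff (e 0) * q.coeff (e 1) := by
  induction p using Polynomial.induction_on' with
  | add p p' hp hp' => simp only [map_add, add_mul, coeff_add, hp, hp', Polynomial.coeff_add]
  | monomial k a =>
    induction q using Polynomial.induction_on' with
    | add q q' hq hq' => simp only [map_add, mul_add, coeff_add, hq, hq', Polynomial.coeff_add]
    | monomial l b =>
      have hsingle : Finsupp.single 0 k + Finsupp.single 1 l = e ↔ k = e 0 ∧ l = e 1 := by
        refine ⟨fun h => by simp [← h], fun ⟨hk, hl⟩ => ?_⟩
        ext i
        fin_cases i <;> simp [hk, hl]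
      simp only [Polynomial.toMvPolynomial, Polynomial.aeval_monomial, algebraMap_eq,
        C_mul_X_pow_eq_monomial, monomial_mul, coeff_monomial, Polynomial.coeff_monomial,
        hsingle, ite_and, ite_mul, zero_mul, mul_ite, mul_zero]
      split_ifs <;> simp_all

section Bivariate

variable {F : Type*} [Field F]

lemma mem_vanishingIdeal_iff_eval_eq_zero {Ξ : Finset (F × F)} {g : MvPolynomial (Fin 2) F} :
    g ∈ vanishingIdeal F Ξ ↔ ∀ ξ ∈ Ξ, eval ![ξ.1, ξ.2] g = 0 := by
  simp only [_root_.vanishingIdeal, Ideal.mem_iInf, RingHom.mem_ker]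

noncomputable def coeffY (g : MvPolynomial (Fin 2) F) (n : ℕ) : F[X] :=
  ∑ e ∈ g.support with e 1 = n, Polynomial.monomial (e 0) (g.coeff e)

noncomputable def verticalSlice (g : MvPolynomial (Fin 2) F) (a : F) : F[X] :=
  ∑ e ∈ g.support, Polynomial.monomial (e 1) (g.coeff e * a ^ e 0)

lemma eval_verticalSlice (g : MvPolynomial (Fin 2) F) (a b : F) :
    (verticalSlice g a).eval b = eval ![a, b] g := by
  simp [verticalSlice, eval_eq', Fin.prod_univ_two, Polynomial.eval_finsetSum, mul_assoc]

lemma coeff_verticalSlice (g : MvPolynomial (Fin 2) F) (a : F) (n : ℕ) :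
    (verticalSlice g a).coeff n = (coeffY g n).eval a := by
  simp only [verticalSlice, coeffY, Polynomial.finsetSum_coeff, Polynomial.coeff_monomial,
    Polynomial.eval_finsetSum, sum_filter]
  refine sum_congr rfl fun e _ => ?_
  split_ifs <;> simp_all

lemma natDegree_verticalSlice_le {g : MvPolynomial (Fin 2) F} {n : ℕ}
    (h : ∀ e ∈ g.support, e 1 ≤ n) (a : F) : (verticalSlice g a).natDegree ≤ n :=
  Polynomial.natDegree_sum_le_of_forall_le _ _ fun e he =>
    (Polynomial.natDegree_monomial_le _).trans (h e he)

lemma natDegree_coeffY_le {g : MvPolynomial (Fin 2) F} {n m : ℕ}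
    (h : ∀ e ∈ g.support, e 1 = n → e 0 ≤ m) : (coeffY g n).natDegree ≤ m :=
  Polynomial.natDegree_sum_le_of_forall_le _ _ fun e he =>
    (Polynomial.natDegree_monomial_le _).trans (h e (mem_filter.1 he).1 (mem_filter.1 he).2)

lemma coeffY_ne_zero {g : MvPolynomial (Fin 2) F} {d : Fin 2 →₀ ℕ} (hd : d ∈ g.support) :
    coeffY g (d 1) ≠ 0 := by
  have hcoeff : (coeffY g (d 1)).coeff (d 0) = g.coeff d := by
    have hmem : d ∈ g.support.filter fun e => e 1 = d 1 := mem_filter.2 ⟨hd, rfl⟩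
    rw [coeffY, Polynomial.finsetSum_coeff, sum_eq_single_of_mem d hmem]
    · exact Polynomial.coeff_monomial_same _ _
    · intro e he hne
      refine Polynomial.coeff_monomial_of_ne _ fun h0 => hne ?_
      ext i
      fin_cases i
      exacts [h0.symm, (mem_filter.1 he).2]
  intro h
  rw [h, Polynomial.coeff_zero] at hcoeff
  exact mem_support_iff.1 hd hcoeff.symm

lemma exists_degree_lt_forall_pow_add_eval_eq_zero (T : Finset F) {j : ℕ} (hT : #T ≤ j) :
    ∃ D : F[X], D.degree < j ∧ ∀ b ∈ T, b ^ j + D.eval b = 0 := by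
  refine ⟨-(Polynomial.X ^ j %ₘ Lagrange.nodal T id), ?_, fun b hb => ?_⟩
  · rw [Polynomial.degree_neg]
    refine (Polynomial.degree_modByMonic_lt _ Lagrange.nodal_monic).trans_le ?_
    rw [Lagrange.degree_nodal]
    exact_mod_cast hT
  · have h := congrArg (Polynomial.eval b)
      (Polynomial.modByMonic_add_div (Polynomial.X ^ j) (Lagrange.nodal T id))
    have hnode : (Lagrange.nodal T id).eval b = 0 := Lagrange.eval_nodal_at_node (v := id) hb
    rw [Polynomial.eval_add, Polynomial.eval_mul, hnode, zero_mul, add_zero, Polynomial.eval_pow,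
      Polynomial.eval_X] at h
    rw [Polynomial.eval_neg, h, add_neg_cancel]

variable [DecidableEq F]

lemma eval_coeffY_eq_zero_of_mem_tallColumns {Ξ : Finset (F × F)} {g : MvPolynomial (Fin 2) F}
    (hg : g ∈ vanishingIdeal F Ξ) {n : ℕ} (hdeg : ∀ e ∈ g.support, e 1 ≤ n) {a : F}
    (ha : a ∈ tallColumns Ξ n) : (coeffY g n).eval a = 0 := by
  have hslice : verticalSlice g a = 0 := by
    refine Polynomial.eq_zero_of_natDegree_lt_card_of_eval_eq_zero' _ (column Ξ a) ?_ ?_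
    · intro b hb
      rw [eval_verticalSlice]
      exact mem_vanishingIdeal_iff_eval_eq_zero.1 hg (a, b) (mem_column.1 hb)
    · rw [card_column]
      exact (natDegree_verticalSlice_le hdeg a).trans_lt (mem_filter.1 ha).2
  rw [← coeff_verticalSlice, hslice, Polynomial.coeff_zero]

lemma card_tallColumns_le_of_inlex_leading {Ξ : Finset (F × F)} {g : MvPolynomial (Fin 2) F}
    (hg : g ∈ vanishingIdeal F Ξ) {d : Fin 2 →₀ ℕ} (hd : d ∈ g.support)
    (hmax : ∀ e ∈ g.support, toLex (e 1, e 0) ≤ toLex (d 1, d 0)) :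
    #(tallColumns Ξ (d 1)) ≤ d 0 := by
  have hmax' (e) (he : e ∈ g.support) : e 1 ≤ d 1 ∧ (e 1 = d 1 → e 0 ≤ d 0) :=
    Prod.Lex.toLex_le_toLex'.1 (hmax e he)
  by_contra! hlt
  exact coeffY_ne_zero hd (Polynomial.eq_zero_of_natDegree_lt_card_of_eval_eq_zero' _ _
    (fun a ha => eval_coeffY_eq_zero_of_mem_tallColumns hg (fun e he => (hmax' e he).1) ha)
    ((natDegree_coeffY_le fun e he => (hmax' e he).2).trans_lt hlt))

/-- `P(x) (y ^ j + ∑_{a ∈ A} L_a(x) D_a(y))`, with `L_a` the Lagrange basis of the nodes `A`. -/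
noncomputable def interpolant (P : F[X]) (A : Finset F) (D : F → F[X]) (j : ℕ) :
    MvPolynomial (Fin 2) F :=
  P.toMvPolynomial (0 : Fin 2) * (Polynomial.X ^ j).toMvPolynomial 1 +
    ∑ a ∈ A, (P * Lagrange.basis A id a).toMvPolynomial 0 * (D a).toMvPolynomial 1

section Interpolant

variable {P : F[X]} {A : Finset F} {D : F → F[X]} {j : ℕ}

lemma eval_interpolant_of_mem {a : F} (ha : a ∈ A) (b : F) :
    eval ![a, b] (interpolant P A D j) = P.eval a * (b ^ j + (D a).eval b) := by
  have hbasis : ∑ a' ∈ A, (Lagrange.basis A id a').eval a * (D a').eval b = (D a).eval b := by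
    refine (sum_eq_single_of_mem a ha fun a' _ hne => ?_).trans ?_
    · rw [show (Lagrange.basis A id a').eval a = 0 from Lagrange.eval_basis_of_ne (v := id) hne ha,
        zero_mul]
    · rw [show (Lagrange.basis A id a).eval a = 1 from
        Lagrange.eval_basis_self (Set.injOn_id _) ha, one_mul]
  simp only [interpolant, map_add, map_mul, map_sum, eval_toMvPolynomial,
    Polynomial.eval_pow, Polynomial.eval_X, Matrix.cons_val_zero, Matrix.cons_val_one]
  rw [← hbasis, mul_add, mul_sum]
  simp only [mul_assoc]

lemma eval_interpolant_of_isRoot {a : F} (ha : P.IsRoot a) (b : F) :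
    eval ![a, b] (interpolant P A D j) = 0 := by
  simp [interpolant, ha.eq_zero]

lemma coeff_interpolant_of_le (hD : ∀ a ∈ A, (D a).degree < j) {e : Fin 2 →₀ ℕ}
    (he : j ≤ e 1) :
    (interpolant P A D j).coeff e = if e 1 = j then P.coeff (e 0) else 0 := by
  have hDe (a) (ha : a ∈ A) : (D a).coeff (e 1) = 0 :=
    Polynomial.coeff_eq_zero_of_degree_lt ((hD a ha).trans_le (by exact_mod_cast he))
  simp only [interpolant, coeff_add, coeff_sum, coeff_toMvPolynomial_zero_mul_toMvPolynomial_one,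
    Polynomial.coeff_X_pow]
  rw [sum_eq_zero fun a ha => by rw [hDe a ha, mul_zero], add_zero]
  split_ifs <;> simp_all

lemma exists_inlex_leading_interpolant (hP : P.Monic) (hD : ∀ a ∈ A, (D a).degree < j) :
    ∃ d ∈ (interpolant P A D j).support,
      (∀ e ∈ (interpolant P A D j).support, toLex (e 1, e 0) ≤ toLex (d 1, d 0)) ∧
      d 0 = P.natDegree ∧ d 1 = j := by
  set d : Fin 2 →₀ ℕ := Finsupp.single 0 P.natDegree + Finsupp.single 1 j
  have hd0 : d 0 = P.natDegree := by simp [d]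
  have hd1 : d 1 = j := by simp [d]
  refine ⟨d, ?_, fun e he => ?_, hd0, hd1⟩
  · rw [mem_support_iff, coeff_interpolant_of_le hD hd1.ge, if_pos hd1, hd0, hP.coeff_natDegree]
    exact one_ne_zero
  · rw [Prod.Lex.toLex_le_toLex', hd0, hd1]
    by_contra! h
    rw [mem_support_iff, coeff_interpolant_of_le hD (by omega)] at he
    split_ifs at he with hj
    · exact he (Polynomial.coeff_eq_zero_of_natDegree_lt (by omega))
    · exact he rfl

end Interpolant

lemma exists_inlex_leading_mem_vanishingIdeal (Ξ : Finset (F × F)) (j : ℕ) :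
    ∃ g ∈ vanishingIdeal F Ξ, ∃ d ∈ g.support,
      (∀ e ∈ g.support, toLex (e 1, e 0) ≤ toLex (d 1, d 0)) ∧
      d 0 = #(tallColumns Ξ j) ∧ d 1 = j := by
  set A := Ξ.image Prod.fst \ tallColumns Ξ j
  have hshort (a) (ha : a ∈ A) : #(column Ξ a) ≤ j := by
    rw [card_column]
    by_contra! h
    exact (mem_sdiff.1 ha).2 (mem_filter.2 ⟨(mem_sdiff.1 ha).1, h⟩)
  choose! D hDdeg hDeval using fun a ha =>
    exists_degree_lt_forall_pow_add_eval_eq_zero (column Ξ a) (hshort a ha)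
  obtain ⟨d, hd, hmax, hd0, hd1⟩ := exists_inlex_leading_interpolant (A := A)
    (Lagrange.nodal_monic (s := tallColumns Ξ j) (v := id)) hDdeg
  refine ⟨_, ?_, d, hd, hmax, by rw [hd0, Lagrange.natDegree_nodal], hd1⟩
  rw [mem_vanishingIdeal_iff_eval_eq_zero]
  rintro ⟨a, b⟩ hab
  by_cases hatall : a ∈ tallColumns Ξ j
  · exact eval_interpolant_of_isRoot (Lagrange.eval_nodal_at_node (v := id) hatall) b
  · have ha : a ∈ A := mem_sdiff.2 ⟨mem_image_of_mem _ hab, hatall⟩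
    rw [eval_interpolant_of_mem ha, hDeval a ha b (mem_column.2 hab), mul_zero]

end Bivariate

/-- `{x^i y^j : (i,j) ∈ S_y(Ξ)}` is exactly the Gröbner éscalier of
the vanishing ideal `I(Ξ)` w.r.t. the inverse lexicographic order (`y` compared
first): `(i,j) ∈ S_y(Ξ)` iff `x^i y^j` is divisible by no `≺_inlex`-leading
monomial of a nonzero element of `I(Ξ)`. -/
theorem Sy_eq_escalier_inlex {F : Type*} [Field F] [DecidableEq F]
    (Ξ : Finset (F × F)) (S : Finset (ℕ × ℕ)) (hS : IsSy Ξ S) (i j : ℕ) :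
    (i, j) ∈ S ↔
      ¬ ∃ g ∈ vanishingIdeal F Ξ, g ≠ 0 ∧ ∃ d ∈ g.support,
        (∀ e ∈ g.support, toLex ((e 1 : ℕ), (e 0 : ℕ)) ≤ toLex ((d 1 : ℕ), (d 0 : ℕ))) ∧
        d 0 ≤ i ∧ d 1 ≤ j := by
  constructor
  · rintro hij ⟨g, hg, -, d, hd, hmax, hdi, hdj⟩
    have hd_mem : d 0 < #(tallColumns Ξ (d 1)) :=
      hS.mem_iff_lt_card_tallColumns.1 (hS.1 _ hij _ hdi hdj)
    exact (card_tallColumns_le_of_inlex_leading hg hd hmax).not_gt hd_mem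
  · intro hnot
    by_contra hij
    rw [hS.mem_iff_lt_card_tallColumns, not_lt] at hij
    obtain ⟨g, hg, d, hd, hmax, hd0, hd1⟩ := exists_inlex_leading_mem_vanishingIdeal Ξ j
    exact hnot ⟨g, hg, by rintro rfl; simp at hd, d, hd, hmax, hd0.trans_le hij, hd1.le⟩
end

section
/- If Ξ ⊂ F² is an A-cartesian set, then A = S_x(Ξ) = S_y(Ξ): the lower set witnessing the cartesian structure coincides with both lower sets obtained from horizontal and vertical line coverings. -/
open MvPolynomial Finset

/-!
A lower set `A ⊂ ℕ²` is a Young diagram, and it is recovered from the multiset of its row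
lengths: the number of rows longer than `i` is the length of column `i` (conjugate partition),
and symmetrically for columns. If `Ξ` is `A`-cartesian, `(i, j) ↦ (x i, y j)` is a bijection
`A → Ξ` carrying the rows and columns of `A` onto the horizontal and vertical sections of `Ξ`,
so `Ξ` has the row and column counts of `A`. Hence the lower sets `S_x(Ξ)` and `S_y(Ξ)`, having
these counts, are both `A`.
-/

/-- `rowCounts`, `colCounts`, `rowCountsA` and `colCountsA` are, definitionally, `fiberCards`
along `Prod.snd` or `Prod.fst`. -/
def fiberCards {α κ : Type*} [DecidableEq κ] (S : Finset α) (k : α → κ) : Multiset ℕ :=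
  (S.image k).val.map fun b => #(S.filter fun a => k a = b)

theorem fiberCards_image {α α' κ κ' : Type*} [DecidableEq α'] [DecidableEq κ]
    [DecidableEq κ'] {S : Finset α} {φ : α → α'} {k : α → κ} {k' : α' → κ'} {g : κ → κ'}
    (hφ : Set.InjOn φ S) (hg : Set.InjOn g (k '' S)) (hk : ∀ a ∈ S, k' (φ a) = g (k a)) :
    fiberCards (S.image φ) k' = fiberCards S k := by
  have himage : (S.image φ).image k' = (S.image k).image g := by
    rw [image_image, image_image]
    exact image_congr fun a ha => hk a ha
  unfold fiberCards
  rw [himage, image_val_of_injOn (by simpa using hg), Multiset.map_map]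
  refine Multiset.map_congr rfl fun b hb => ?_
  obtain ⟨a₀, ha₀, rfl⟩ := mem_image.mp hb
  have hfiber : (S.image φ).filter (fun c => k' c = g (k a₀)) =
      (S.filter fun a => k a = k a₀).image φ := by
    rw [filter_image]
    refine congrArg _ (filter_congr fun a ha => ?_)
    rw [hk a ha]
    exact hg.eq_iff (Set.mem_image_of_mem k ha) (Set.mem_image_of_mem k ha₀)
  rw [Function.comp_apply, hfiber,
    card_image_of_injOn (hφ.mono (coe_subset.mpr (filter_subset _ _)))]

theorem injOn_prodMap_of_injOn_sections {α β γ δ : Type*} {s : Set (α × β)} {f : α → γ}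
    {g : β → δ} (hf : Set.InjOn f {a | ∃ b, (a, b) ∈ s})
    (hg : Set.InjOn g {b | ∃ a, (a, b) ∈ s}) :
    Set.InjOn (Prod.map f g) s := by
  refine (hf.prodMap hg).mono ?_
  rintro ⟨a, b⟩ hab
  exact ⟨⟨b, hab⟩, ⟨a, hab⟩⟩

/-- Mathlib's Young diagrams put cell `(i, j)` in row `i`, so the rows of `A` in the sense of
`rowCountsA` (fixed second coordinate) are the columns of `hA.toYoungDiagram`. -/
def IsLowerSet2.toYoungDiagram {A : Finset (ℕ × ℕ)} (hA : IsLowerSet2 A) : YoungDiagram :=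
  ⟨A, fun a b hba ha => hA a ha b hba.1 hba.2⟩

namespace YoungDiagram

theorem fiberCards_snd_eq_map_colLen (μ : YoungDiagram) :
    fiberCards μ.cells Prod.snd = (μ.cells.image Prod.snd).val.map μ.colLen :=
  Multiset.map_congr rfl fun _ _ => μ.colLen_eq_card.symm

theorem countP_lt_fiberCards_snd (μ : YoungDiagram) (i : ℕ) :
    (fiberCards μ.cells Prod.snd).countP (i < ·) = μ.rowLen i := by
  have hfilter :
      (μ.cells.image Prod.snd).filter (fun j => i < μ.colLen j) = range (μ.rowLen i) := by
    ext j
    simp only [mem_filter, mem_image, mem_range, ← mem_iff_lt_colLen, ← mem_iff_lt_rowLen]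
    exact ⟨And.right, fun h => ⟨⟨(i, j), h, rfl⟩, h⟩⟩
  rw [fiberCards_snd_eq_map_colLen, Multiset.countP_map, ← filter_val, hfilter]
  exact card_range _

theorem fiberCards_transpose_snd (μ : YoungDiagram) :
    fiberCards μ.transpose.cells Prod.snd = fiberCards μ.cells Prod.fst := by
  have hcells : μ.transpose.cells = μ.cells.image Prod.swap := by
    ext ⟨a, b⟩
    simp [mem_transpose]
  rw [hcells]
  exact fiberCards_image Prod.swap_injective.injOn Function.injective_id.injOn fun _ _ => rfl

theorem countP_lt_fiberCards_fst (μ : YoungDiagram) (j : ℕ) :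
    (fiberCards μ.cells Prod.fst).countP (j < ·) = μ.colLen j := by
  rw [← fiberCards_transpose_snd, countP_lt_fiberCards_snd, rowLen_transpose]

theorem ext_of_fiberCards_snd_eq {μ ν : YoungDiagram}
    (h : fiberCards μ.cells Prod.snd = fiberCards ν.cells Prod.snd) : μ = ν := by
  ext ⟨i, j⟩
  simp only [mem_cells, mem_iff_lt_rowLen, ← countP_lt_fiberCards_snd, h]

theorem ext_of_fiberCards_fst_eq {μ ν : YoungDiagram}
    (h : fiberCards μ.cells Prod.fst = fiberCards ν.cells Prod.fst) : μ = ν := by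
  ext ⟨i, j⟩
  simp only [mem_cells, mem_iff_lt_colLen, ← countP_lt_fiberCards_fst, h]

end YoungDiagram

theorem IsLowerSet2.eq_of_rowCountsA_eq_s7 {A B : Finset (ℕ × ℕ)} (hA : IsLowerSet2 A)
    (hB : IsLowerSet2 B) (h : rowCountsA A = rowCountsA B) : A = B :=
  congrArg YoungDiagram.cells <|
    YoungDiagram.ext_of_fiberCards_snd_eq (μ := hA.toYoungDiagram) (ν := hB.toYoungDiagram) h

theorem IsLowerSet2.eq_of_colCountsA_eq {A B : Finset (ℕ × ℕ)} (hA : IsLowerSet2 A)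
    (hB : IsLowerSet2 B) (h : colCountsA A = colCountsA B) : A = B :=
  congrArg YoungDiagram.cells <|
    YoungDiagram.ext_of_fiberCards_fst_eq (μ := hA.toYoungDiagram) (ν := hB.toYoungDiagram) h

section Cartesian

variable {F : Type*} [Field F] [DecidableEq F] {A : Finset (ℕ × ℕ)} {Ξ : Finset (F × F)}

theorem IsCartesianWith.rowCounts_eq (h : IsCartesianWith A Ξ) : rowCounts Ξ = rowCountsA A := by
  obtain ⟨-, x, y, hx, hy, rfl⟩ := h
  have hsnd : Prod.snd '' (A : Set (ℕ × ℕ)) ⊆ {j | ∃ i, (i, j) ∈ A} := by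
    rintro _ ⟨⟨i, j⟩, hij, rfl⟩
    exact ⟨i, hij⟩
  exact fiberCards_image (injOn_prodMap_of_injOn_sections hx hy) (hy.mono hsnd) fun _ _ => rfl

theorem IsCartesianWith.colCounts_eq (h : IsCartesianWith A Ξ) : colCounts Ξ = colCountsA A := by
  obtain ⟨-, x, y, hx, hy, rfl⟩ := h
  have hfst : Prod.fst '' (A : Set (ℕ × ℕ)) ⊆ {i | ∃ j, (i, j) ∈ A} := by
    rintro _ ⟨⟨i, j⟩, hij, rfl⟩
    exact ⟨j, hij⟩
  exact fiberCards_image (injOn_prodMap_of_injOn_sections hx hy) (hx.mono hfst) fun _ _ => rfl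

end Cartesian

/-- If `Ξ` is `A`-cartesian then `A = S_x(Ξ) = S_y(Ξ)`. -/
theorem cartesian_lower_set_eq_Sx_eq_Sy {F : Type*} [Field F] [DecidableEq F]
    (Ξ : Finset (F × F)) (A B C : Finset (ℕ × ℕ))
    (hA : IsCartesianWith A Ξ) (hB : IsSx Ξ B) (hC : IsSy Ξ C) :
    A = B ∧ A = C :=
  ⟨hA.1.eq_of_rowCountsA_eq_s7 hB.1 (hA.rowCounts_eq.symm.trans hB.2.symm),
    hA.1.eq_of_colCountsA_eq hC.1 (hA.colCounts_eq.symm.trans hC.2.symm)⟩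
end

section
/- A maximal cartesian subset of a finite point set need not be unique: there exists a finite set Ξ ⊂ ℚ² admitting at least three distinct maximal cartesian subsets. Concretely, for Ξ = {(0,0),(0,2),(0,3),(1,1),(5/2,0),(5/2,1),(5/2,2),(4,0),(4,2)}, the sets Ξ₁' = {(0,0),(0,2),(5/2,0),(5/2,1),(5/2,2),(4,0),(4,2)}, Ξ₂' = {(0,0),(0,2),(0,3),(5/2,0),(5/2,2),(4,0),(4,2)}, and Ξ₃' = {(1,1),(5/2,0),(5/2,1),(5/2,2)} are all maximal cartesian subsets of Ξ. -/
open MvPolynomial Finset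

/-- `Ξ'` is a maximal cartesian subset of `Ξ`. -/
def IsMaximalCartesianSubset {F : Type*} [Field F] [DecidableEq F]
    (Ξ Ξ' : Finset (F × F)) : Prop :=
  Ξ' ⊆ Ξ ∧ IsCartesian Ξ' ∧
    ∀ Ξ'' ⊆ Ξ, IsCartesian Ξ'' → Ξ' ⊆ Ξ'' → Ξ'' = Ξ'

/-!
In a cartesian set the rows are nested, because the rows of a lower set are initial segments of `ℕ`.
Hence among two points `(a, c)` and `(b, d)` of a cartesian set, one of the corners `(a, d)`, `(b, c)`
lies in it too. So a point `p` of `Ξ` cannot be added to a cartesian `Ξ' ⊆ Ξ` as soon as some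
`q ∈ Ξ'` has neither corner of the rectangle spanned by `p` and `q` in `Ξ`; each of the three subsets
blocks every other point of `Ξ` in this way.
-/

theorem isLowerSet2_of_forall_Iic_subset {A : Finset (ℕ × ℕ)} (hA : ∀ a ∈ A, Iic a ⊆ A) :
    IsLowerSet2 A :=
  fun a ha _ h₁ h₂ => hA a ha (mem_Iic.2 ⟨h₁, h₂⟩)

section Cartesian

variable {F : Type*} [Field F] [DecidableEq F]

theorem isCartesian_of_eq_image {A : Finset (ℕ × ℕ)} (hA : IsLowerSet2 A) (x y : ℕ → F)
    (hx : Set.InjOn x ↑(A.image Prod.fst)) (hy : Set.InjOn y ↑(A.image Prod.snd))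
    {Ξ : Finset (F × F)} (hΞ : Ξ = A.image fun ij => (x ij.1, y ij.2)) : IsCartesian Ξ := by
  refine ⟨A, hA, x, y, hx.mono ?_, hy.mono ?_, hΞ⟩
  · rintro i ⟨j, hij⟩
    exact mem_image_of_mem Prod.fst hij
  · rintro j ⟨i, hij⟩
    exact mem_image_of_mem Prod.snd hij

theorem IsCartesian.mk_mem_or_mk_mem {Ξ : Finset (F × F)} (hΞ : IsCartesian Ξ) {a b c d : F}
    (hac : (a, c) ∈ Ξ) (hbd : (b, d) ∈ Ξ) : (a, d) ∈ Ξ ∨ (b, c) ∈ Ξ := by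
  obtain ⟨A, hA, x, y, -, -, rfl⟩ := hΞ
  obtain ⟨⟨i, j⟩, hij, hxy⟩ := mem_image.1 hac
  obtain ⟨⟨i', j'⟩, hij', hxy'⟩ := mem_image.1 hbd
  simp only [Prod.mk.injEq] at hxy hxy'
  rcases le_total j j' with hj | hj
  · exact .inr (mem_image.2 ⟨(i', j), hA _ hij' _ le_rfl hj, by simp [hxy.2, hxy'.1]⟩)
  · exact .inl (mem_image.2 ⟨(i, j'), hA _ hij _ le_rfl hj, by simp [hxy.1, hxy'.2]⟩)

theorem isMaximalCartesianSubset_of_blocked {Ξ Ξ' : Finset (F × F)} (hsub : Ξ' ⊆ Ξ)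
    (hΞ' : IsCartesian Ξ')
    (hblocked : ∀ p ∈ Ξ \ Ξ', ∃ q ∈ Ξ', (p.1, q.2) ∉ Ξ ∧ (q.1, p.2) ∉ Ξ) :
    IsMaximalCartesianSubset Ξ Ξ' := by
  refine ⟨hsub, hΞ', fun Ξ'' hΞ'' hcart hle => (Subset.antisymm hle fun p hp => ?_).symm⟩
  by_contra hp'
  obtain ⟨q, hq, hpq, hqp⟩ := hblocked p (mem_sdiff.2 ⟨hΞ'' hp, hp'⟩)
  rcases hcart.mk_mem_or_mk_mem hp (hle hq) with h | h
  exacts [hpq (hΞ'' h), hqp (hΞ'' h)]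

end Cartesian

/-- Maximal cartesian subsets need not be unique: the displayed
set `Ξ ⊂ ℚ²` has (at least) three distinct maximal cartesian subsets. -/
theorem maximal_cartesian_subset_not_unique :
    let Ξ : Finset (ℚ × ℚ) :=
      {(0, 0), (0, 2), (0, 3), (1, 1), (5/2, 0), (5/2, 1), (5/2, 2), (4, 0), (4, 2)}
    let Ξ₁ : Finset (ℚ × ℚ) :=
      {(0, 0), (0, 2), (5/2, 0), (5/2, 1), (5/2, 2), (4, 0), (4, 2)}
    let Ξ₂ : Finset (ℚ × ℚ) :=
      {(0, 0), (0, 2), (0, 3), (5/2, 0), (5/2, 2), (4, 0), (4, 2)}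
    let Ξ₃ : Finset (ℚ × ℚ) := {(1, 1), (5/2, 0), (5/2, 1), (5/2, 2)}
    IsMaximalCartesianSubset Ξ Ξ₁ ∧ IsMaximalCartesianSubset Ξ Ξ₂ ∧
      IsMaximalCartesianSubset Ξ Ξ₃ ∧ Ξ₁ ≠ Ξ₂ ∧ Ξ₁ ≠ Ξ₃ ∧ Ξ₂ ≠ Ξ₃ := by
  intro Ξ Ξ₁ Ξ₂ Ξ₃
  let A₇ : Finset (ℕ × ℕ) := {(0, 0), (0, 1), (0, 2), (1, 0), (1, 1), (2, 0), (2, 1)}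
  let A₄ : Finset (ℕ × ℕ) := {(0, 0), (0, 1), (0, 2), (1, 0)}
  have hA₇ : IsLowerSet2 A₇ := isLowerSet2_of_forall_Iic_subset (by decide)
  have hA₄ : IsLowerSet2 A₄ := isLowerSet2_of_forall_Iic_subset (by decide)
  have hΞ₁ : IsCartesian Ξ₁ := isCartesian_of_eq_image hA₇
    (fun i => [5/2, 0, 4].getD i 0) (fun j => [0, 2, 1].getD j 0)
    (by decide +kernel) (by decide +kernel) (by decide +kernel)
  have hΞ₂ : IsCartesian Ξ₂ := isCartesian_of_eq_image hA₇
    (fun i => [0, 5/2, 4].getD i 0) (fun j => [0, 2, 3].getD j 0)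
    (by decide +kernel) (by decide +kernel) (by decide +kernel)
  have hΞ₃ : IsCartesian Ξ₃ := isCartesian_of_eq_image hA₄
    (fun i => [5/2, 1].getD i 0) (fun j => [1, 0, 2].getD j 0)
    (by decide +kernel) (by decide +kernel) (by decide +kernel)
  exact ⟨isMaximalCartesianSubset_of_blocked (by decide +kernel) hΞ₁ (by decide +kernel),
    isMaximalCartesianSubset_of_blocked (by decide +kernel) hΞ₂ (by decide +kernel),
    isMaximalCartesianSubset_of_blocked (by decide +kernel) hΞ₃ (by decide +kernel),
    by decide +kernel, by decide +kernel, by decide +kernel⟩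
end
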